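/- arXiv:1811.05131 — 5 statements merged into one kernel-verified Lean document; each statement's English description precedes it below -/
import Mathlib

section
/- Let n ≥ 1 and let w̄=(D̄,c̄,Ā,b̄,ᾱ) be a parameter of (QP_w) with D̄, Ā real symmetric n×n matrices, c̄,b̄ ∈ ℝⁿ, ᾱ ∈ ℝ. Suppose x̄ ∈ ℝⁿ satisfies F(x̄,w̄) = ½x̄ᵀĀx̄ + b̄ᵀx̄ + ᾱ < 0 and D̄x̄ + c̄ = 0 (so x̄ ∈ S(w̄)). Then the stationary point set map S is locally Lipschitz-like around (w̄,x̄) if and only if det D̄ ≠ 0. -/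
/-!
Near a strictly feasible `x̄` the constraint is inactive, so complementarity forces the
multiplier to vanish and `S(w)` is locally the solution set of `Dx + c = 0`. If `D̄` is
invertible, this is the single point `-D⁻¹c`, which by Cramer's rule is a smooth, hence locally
Lipschitz, function of `w`. If `D̄` is singular, a left null vector `v` of `D̄` is orthogonal to
the range of `D̄`, which contains `c̄`; so `Dx + c̄ + tv = 0` has no solution for `t ≠ 0`, and
`S` is empty near `x̄` for arbitrarily small perturbations of `c̄`. This contradicts the lower
semicontinuity that the Aubin property implies.
-/

open Matrix

attribute [local instance] Matrix.normedAddCommGroup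

noncomputable section

/-- The Euclidean space `ℝⁿ`. -/
abbrev En (n : ℕ) := EuclideanSpace ℝ (Fin n)

/-- The parameter space `W` of the quadratic program `(QP_w)`:
a parameter is a tuple `w = (D, c, A, b, α)`. -/
abbrev QPParam (n : ℕ) :=
  Matrix (Fin n) (Fin n) ℝ × (Fin n → ℝ) × Matrix (Fin n) (Fin n) ℝ × (Fin n → ℝ) × ℝ

/-- The constraint function `F(x,w) = ½ xᵀAx + bᵀx + α`. -/
def Fq {n : ℕ} (w : QPParam n) (x : En n) : ℝ :=
  (1 / 2) * (w.2.2.1.mulVec x ⬝ᵥ x) + w.2.2.2.1 ⬝ᵥ x + w.2.2.2.2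

/-- The stationary (KKT) point set `S(w)` of `(QP_w)`. -/
def Sqp {n : ℕ} (w : QPParam n) : Set (En n) :=
  {x | Fq w x ≤ 0 ∧ ∃ μ : ℝ, 0 ≤ μ ∧
    w.1.mulVec x + w.2.1 + μ • (w.2.2.1.mulVec x + w.2.2.2.1) = (0 : Fin n → ℝ) ∧
    μ * Fq w x = 0}

/-- `S` is locally Lipschitz-like (has the Aubin property) around `(w0, x0)`:
there exist `ℓ > 0` and neighborhoods `U` of `x0`, `V` of `w0` such that
`S(w') ∩ U ⊆ S(w) + ℓ‖w' - w‖ B̄` for all `w, w' ∈ V`. -/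
def LipschitzLike {W X : Type*} [NormedAddCommGroup W] [NormedAddCommGroup X]
    (S : W → Set X) (w0 : W) (x0 : X) : Prop :=
  ∃ ℓ : ℝ, 0 < ℓ ∧ ∃ U ∈ nhds x0, ∃ V ∈ nhds w0,
    ∀ w ∈ V, ∀ w' ∈ V, ∀ x ∈ S w' ∩ U, ∃ y ∈ S w, ‖x - y‖ ≤ ℓ * ‖w' - w‖

attribute [local instance] Matrix.normedSpace

open Filter Topology

section LipschitzLike

variable {W X : Type*} [NormedAddCommGroup W] [NormedAddCommGroup X] {S : W → Set X}
  {w0 : W} {x0 : X}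

theorem LipschitzLike.eventually_inter_nonempty (hS : LipschitzLike S w0 x0) (hx0 : x0 ∈ S w0)
    {U : Set X} (hU : U ∈ 𝓝 x0) : ∀ᶠ w in 𝓝 w0, (S w ∩ U).Nonempty := by
  obtain ⟨ℓ, hℓ, U', hU', V, hV, hS⟩ := hS
  obtain ⟨ε, hε, hεU⟩ := Metric.mem_nhds_iff.1 hU
  filter_upwards [hV, Metric.ball_mem_nhds w0 (div_pos hε hℓ)] with w hwV hwball
  obtain ⟨y, hyS, hy⟩ := hS w hwV w0 (mem_of_mem_nhds hV) x0 ⟨hx0, mem_of_mem_nhds hU'⟩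
  refine ⟨y, hyS, hεU ?_⟩
  rw [Metric.mem_ball, dist_comm, dist_eq_norm]
  calc ‖x0 - y‖ ≤ ℓ * ‖w0 - w‖ := hy
    _ < ℓ * (ε / ℓ) := by
      rw [norm_sub_rev, ← dist_eq_norm]
      exact mul_lt_mul_of_pos_left hwball hℓ
    _ = ε := mul_div_cancel₀ ε hℓ.ne'

theorem lipschitzLike_of_lipschitzOnWith_localization {g : W → X} {K : NNReal} {U : Set X}
    {V : Set W} (hV : V ∈ 𝓝 w0) (hU : U ∈ 𝓝 x0) (hg : LipschitzOnWith K g V)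
    (hgS : ∀ w ∈ V, g w ∈ S w) (hSg : ∀ w ∈ V, ∀ x ∈ S w ∩ U, x = g w) :
    LipschitzLike S w0 x0 := by
  refine ⟨K + 1, by positivity, U, hU, V, hV, fun w hw w' hw' x hx => ⟨g w, hgS w hw, ?_⟩⟩
  rw [hSg w' hw' x hx]
  calc ‖g w' - g w‖ ≤ K * ‖w' - w‖ := hg.norm_sub_le hw' hw
    _ ≤ (K + 1) * ‖w' - w‖ := by gcongr; linarith

end LipschitzLike

section Determinant

variable {𝕜 E ι : Type*} [NontriviallyNormedField 𝕜] [NormedAddCommGroup E] [NormedSpace 𝕜 E]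
  [DecidableEq ι] {m : WithTop ℕ∞}

theorem contDiff_det_of_entries [Fintype ι] {f : E → Matrix ι ι 𝕜}
    (hf : ∀ i j, ContDiff 𝕜 m fun e => f e i j) : ContDiff 𝕜 m fun e => (f e).det := by
  simp_rw [Matrix.det_apply']
  exact ContDiff.sum fun σ _ => contDiff_const.mul (contDiff_prod fun i _ => hf _ _)

theorem contDiff_updateCol_of_entries {f : E → Matrix ι ι 𝕜} {g : E → ι → 𝕜} (k : ι)
    (hf : ∀ i j, ContDiff 𝕜 m fun e => f e i j) (hg : ∀ i, ContDiff 𝕜 m fun e => g e i)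
    (i j : ι) : ContDiff 𝕜 m fun e => (f e).updateCol k (g e) i j := by
  by_cases h : j = k
  · simpa [Matrix.updateCol_apply, h] using hg i
  · simpa [Matrix.updateCol_apply, h] using hf i j

end Determinant

/-- No invertibility is needed: for singular `M` both sides vanish. -/
theorem Matrix.inv_mulVec_eq_det_inv_smul_cramer {K ι : Type*} [Field K] [Fintype ι]
    [DecidableEq ι] (M : Matrix ι ι K) (v : ι → K) : M⁻¹ *ᵥ v = M.det⁻¹ • M.cramer v := by
  rw [Matrix.inv_def, Ring.inverse_eq_inv', Matrix.smul_mulVec, Matrix.cramer_eq_adjugate_mulVec]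

theorem mulVec_add_ne_zero_of_vecMul_eq_zero {K ι : Type*} [Field K] [LinearOrder K]
    [IsStrictOrderedRing K] [Fintype ι] {M : Matrix ι ι K} {v c x y : ι → K} {t : K}
    (hv : v ≠ 0) (hvM : v ᵥ* M = 0) (hc : M *ᵥ x + c = 0) (ht : t ≠ 0) :
    M *ᵥ y + (c + t • v) ≠ 0 := by
  intro h
  have hvc : v ⬝ᵥ c = 0 := by
    simpa [dotProduct_add, dotProduct_mulVec, hvM] using congrArg (v ⬝ᵥ ·) hc
  have : t * (v ⬝ᵥ v) = 0 := by
    simpa [dotProduct_add, dotProduct_mulVec, hvM, hvc] using congrArg (v ⬝ᵥ ·) h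
  exact mul_ne_zero ht (mt dotProduct_self_eq_zero.1 hv) this

section StationaryPoints

variable {n : ℕ}

theorem continuous_Fq : Continuous fun p : QPParam n × En n => Fq p.1 p.2 := by
  have hx : Continuous fun p : QPParam n × En n => (p.2 : Fin n → ℝ) :=
    (PiLp.continuous_ofLp 2 _).comp continuous_snd
  have hA : Continuous fun p : QPParam n × En n => p.1.2.2.1 := by fun_prop
  have hb : Continuous fun p : QPParam n × En n => p.1.2.2.2.1 := by fun_prop
  have hα : Continuous fun p : QPParam n × En n => p.1.2.2.2.2 := by fun_prop
  exact ((continuous_const.mul ((hA.matrix_mulVec hx).dotProduct hx)).add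
    (hb.dotProduct hx)).add hα

theorem exists_nhds_Fq_neg {w0 : QPParam n} {x0 : En n} (hF : Fq w0 x0 < 0) :
    ∃ V ∈ 𝓝 w0, ∃ U ∈ 𝓝 x0, ∀ w ∈ V, ∀ x ∈ U, Fq w x < 0 := by
  have h : {p : QPParam n × En n | Fq p.1 p.2 < 0} ∈ 𝓝 (w0, x0) :=
    (isOpen_lt continuous_Fq continuous_const).mem_nhds hF
  obtain ⟨V, hV, U, hU, hVU⟩ := mem_nhds_prod_iff.1 h
  refine ⟨V, hV, U, hU, fun w hw x hx => ?_⟩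
  simpa only [Set.mem_ofPred_eq] using hVU (Set.mk_mem_prod hw hx)

theorem mem_Sqp_iff_of_Fq_neg {w : QPParam n} {x : En n} (hF : Fq w x < 0) :
    x ∈ Sqp w ↔ w.1 *ᵥ x + w.2.1 = 0 := by
  constructor
  · rintro ⟨-, μ, -, hKKT, hcompl⟩
    obtain rfl : μ = 0 := (mul_eq_zero.1 hcompl).resolve_right hF.ne
    simpa using hKKT
  · intro h
    exact ⟨hF.le, 0, le_rfl, by simpa using h, zero_mul _⟩

/-- The unconstrained stationary point `-D⁻¹c`; Mathlib's `⁻¹` makes it `0` for singular `D`. -/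
def freeStationaryPoint (w : QPParam n) : En n := WithLp.toLp 2 (w.1⁻¹ *ᵥ -w.2.1)

theorem mulVec_freeStationaryPoint_add {w : QPParam n} (h : w.1.det ≠ 0) :
    w.1 *ᵥ freeStationaryPoint w + w.2.1 = 0 := by
  show w.1 *ᵥ (w.1⁻¹ *ᵥ -w.2.1) + w.2.1 = 0
  rw [Matrix.mulVec_mulVec, Matrix.mul_nonsing_inv _ (isUnit_iff_ne_zero.2 h),
    Matrix.one_mulVec, neg_add_cancel]

theorem eq_freeStationaryPoint {w : QPParam n} (h : w.1.det ≠ 0) {x : En n}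
    (hx : w.1 *ᵥ x + w.2.1 = 0) : x = freeStationaryPoint w := by
  show x = WithLp.toLp 2 (w.1⁻¹ *ᵥ -w.2.1)
  rw [← eq_neg_of_add_eq_zero_left hx, Matrix.mulVec_mulVec,
    Matrix.nonsing_inv_mul _ (isUnit_iff_ne_zero.2 h), Matrix.one_mulVec]

theorem contDiffAt_freeStationaryPoint {w : QPParam n} (h : w.1.det ≠ 0) {m : WithTop ℕ∞} :
    ContDiffAt ℝ m freeStationaryPoint w := by
  have hD : ∀ i j, ContDiff ℝ m fun w : QPParam n => w.1 i j := fun i j =>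
    (contDiff_apply_apply ℝ ℝ i j).comp contDiff_fst
  have hc : ∀ i, ContDiff ℝ m fun w : QPParam n => (-w.2.1) i := fun i =>
    ((contDiff_apply ℝ ℝ i).comp (contDiff_fst.comp contDiff_snd)).neg
  refine (contDiffAt_piLp _).2 fun i => ?_
  simp only [freeStationaryPoint, WithLp.ofLp_toLp, Matrix.inv_mulVec_eq_det_inv_smul_cramer,
    Pi.smul_apply, smul_eq_mul, Matrix.cramer_apply]
  exact ((contDiff_det_of_entries hD).contDiffAt.inv h).mul
    (contDiff_det_of_entries (contDiff_updateCol_of_entries i hD hc)).contDiffAt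

end StationaryPoints

section AubinProperty

variable {n : ℕ} {w0 : QPParam n} {x0 : En n}

theorem lipschitzLike_Sqp_of_det_ne_zero (hF : Fq w0 x0 < 0) (hstat : w0.1 *ᵥ x0 + w0.2.1 = 0)
    (hdet : w0.1.det ≠ 0) : LipschitzLike Sqp w0 x0 := by
  obtain ⟨V₀, hV₀, U₀, hU₀, hneg⟩ := exists_nhds_Fq_neg hF
  obtain ⟨K, T, hT, hK⟩ := (contDiffAt_freeStationaryPoint hdet (m := 1)).exists_lipschitzOnWith
  have hdet_nhds : {w : QPParam n | w.1.det ≠ 0} ∈ 𝓝 w0 :=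
    (isOpen_ne_fun continuous_fst.matrix_det continuous_const).mem_nhds hdet
  have hpre : freeStationaryPoint ⁻¹' U₀ ∈ 𝓝 w0 := by
    refine (contDiffAt_freeStationaryPoint hdet (m := 0)).continuousAt.preimage_mem_nhds ?_
    rwa [← eq_freeStationaryPoint hdet hstat]
  refine lipschitzLike_of_lipschitzOnWith_localization
    (inter_mem (inter_mem hV₀ hdet_nhds) (inter_mem hT hpre)) hU₀
    (hK.mono fun w hw => hw.2.1) ?_ ?_
  · rintro w ⟨⟨hwV, hwdet⟩, -, hwU⟩
    exact (mem_Sqp_iff_of_Fq_neg (hneg w hwV _ hwU)).2 (mulVec_freeStationaryPoint_add hwdet)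
  · rintro w ⟨⟨hwV, hwdet⟩, -⟩ x ⟨hxS, hxU⟩
    exact eq_freeStationaryPoint hwdet ((mem_Sqp_iff_of_Fq_neg (hneg w hwV x hxU)).1 hxS)

theorem det_ne_zero_of_lipschitzLike_Sqp (hF : Fq w0 x0 < 0)
    (hstat : w0.1 *ᵥ x0 + w0.2.1 = 0) (hS : LipschitzLike Sqp w0 x0) : w0.1.det ≠ 0 := by
  intro hdet
  obtain ⟨v, hv, hvD⟩ := Matrix.exists_vecMul_eq_zero_iff.2 hdet
  -- `Fq` does not involve `c`, so `Fq (γ t) = Fq w0` and `{x | Fq w0 x < 0}` below serves all `t`.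
  let γ : ℝ → QPParam n := fun t => (w0.1, w0.2.1 + t • v, w0.2.2)
  have hγ : Tendsto γ (𝓝[>] 0) (𝓝 w0) := by
    have hγc : Continuous γ := by fun_prop
    simpa [γ] using hγc.continuousWithinAt (s := Set.Ioi 0) (x := 0) |>.tendsto
  have hx0 : x0 ∈ Sqp w0 := (mem_Sqp_iff_of_Fq_neg hF).2 hstat
  have hU : {x | Fq w0 x < 0} ∈ 𝓝 x0 :=
    (isOpen_lt (continuous_Fq.comp (Continuous.prodMk_right w0)) continuous_const).mem_nhds hF
  obtain ⟨t, ⟨y, hyS, hyF⟩, ht⟩ :=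
    ((hγ.eventually (hS.eventually_inter_nonempty hx0 hU)).and self_mem_nhdsWithin).exists
  exact mulVec_add_ne_zero_of_vecMul_eq_zero hv hvD hstat (ne_of_gt ht)
    ((mem_Sqp_iff_of_Fq_neg (w := γ t) hyF).1 hyS)

end AubinProperty

theorem stmt0_general {n : ℕ}
    (D A : Matrix (Fin n) (Fin n) ℝ) (c b : Fin n → ℝ) (α : ℝ) (x0 : En n)
    (hF : Fq (D, c, A, b, α) x0 < 0)
    (hstat : D.mulVec x0 + c = 0) :
    LipschitzLike Sqp (D, c, A, b, α) x0 ↔ D.det ≠ 0 :=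
  ⟨det_ne_zero_of_lipschitzLike_Sqp hF hstat, lipschitzLike_Sqp_of_det_ne_zero hF hstat⟩

/-- For `(QP_w)` with `F(x0,w0) < 0` and `D x0 + c = 0`,
the stationary point set map `S` is locally Lipschitz-like around `(w0, x0)`
if and only if `det D ≠ 0`. -/
theorem stmt0 {n : ℕ} (hn : 1 ≤ n)
    (D A : Matrix (Fin n) (Fin n) ℝ) (c b : Fin n → ℝ) (α : ℝ) (x0 : En n)
    (hD : D.IsSymm) (hA : A.IsSymm)
    (hF : Fq (D, c, A, b, α) x0 < 0)
    (hstat : D.mulVec x0 + c = 0) :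
    LipschitzLike Sqp (D, c, A, b, α) x0 ↔ D.det ≠ 0 :=
  stmt0_general D A c b α x0 hF hstat
end
end

section
/- Let n ≥ 1 and let w̄=(D̄,c̄,Ā,b̄,ᾱ) be a parameter of (QP_w) with D̄, Ā real symmetric n×n matrices, c̄,b̄ ∈ ℝⁿ, ᾱ ∈ ℝ. Suppose x̄ ∈ ℝⁿ satisfies F(x̄,w̄) = 0, Āx̄+b̄ ≠ 0, and D̄x̄+c̄ = 0 (so x̄ ∈ S(w̄) and the unique Lagrange multiplier corresponding to x̄ is λ = 0). If S is locally Lipschitz-like around (w̄,x̄), then for all v ∈ ℝⁿ and γ ∈ ℝ: D̄v + γ(Āx̄+b̄) = 0, (Āx̄+b̄)ᵀv ≥ 0 and γ ≥ 0 together imply v = 0 and γ = 0. -/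
open Matrix

attribute [local instance] Matrix.normedAddCommGroup

noncomputable section

/-!
Perturb the parameter along `d = (0, v, 0, 0, γ)`, i.e. `c ↦ c + η v` and `α ↦ α + η γ`.
Since `x0 ∈ S(w)` with multiplier `0`, the Aubin property gives stationary points `x0 + z` of
the perturbed problems with `‖z‖ = O(η)` and multipliers `μ ≥ 0`. Testing the perturbed
stationarity equation against `g = A x0 + b` gives `μ = O(η)`; testing it against `v`, using
`D v = -γ g` and the perturbed feasibility `gᵀz + ½ zᵀAz + ηγ ≤ 0`, gives
`η (vᵀv + γ²) ≤ μ |vᵀAz| + γ/2 |zᵀAz| = O(η²)`. Letting `η ↓ 0` forces `v = 0` and `γ = 0`.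
-/

open Filter Topology

attribute [local instance] Matrix.normedSpace

theorem nonpos_of_eventually_le_mul {Q K : ℝ} (h : ∀ᶠ η in 𝓝[>] (0 : ℝ), Q ≤ K * η) : Q ≤ 0 := by
  have hlim : Tendsto (fun η : ℝ => K * η) (𝓝[>] 0) (𝓝 0) := by
    simpa using ((continuous_const_mul K).tendsto 0).mono_left nhdsWithin_le_nhds
  exact ge_of_tendsto hlim h

theorem LipschitzLike.eventually_exists_mem_norm_sub_le {W X : Type*} [NormedAddCommGroup W]
    [NormedSpace ℝ W] [NormedAddCommGroup X] {S : W → Set X} {w₀ : W} {x₀ : X}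
    (hS : LipschitzLike S w₀ x₀) (hx₀ : x₀ ∈ S w₀) (d : W) :
    ∃ L, ∀ᶠ η in 𝓝[>] (0 : ℝ), ∃ y ∈ S (w₀ + η • d), ‖y - x₀‖ ≤ L * η := by
  obtain ⟨ℓ, -, U, hU, V, hV, hS⟩ := hS
  have hpath : Tendsto (fun η : ℝ => w₀ + η • d) (𝓝[>] 0) (𝓝 w₀) := by
    have : Continuous (fun η : ℝ => w₀ + η • d) := by fun_prop
    simpa using (this.tendsto 0).mono_left nhdsWithin_le_nhds
  refine ⟨ℓ * ‖d‖, ?_⟩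
  filter_upwards [hpath hV, self_mem_nhdsWithin] with η hηV hη
  obtain ⟨y, hy, hdist⟩ := hS _ hηV w₀ (mem_of_mem_nhds hV) x₀ ⟨hx₀, mem_of_mem_nhds hU⟩
  refine ⟨y, hy, ?_⟩
  rw [norm_sub_rev]
  calc ‖x₀ - y‖ ≤ ℓ * ‖w₀ - (w₀ + η • d)‖ := hdist
    _ = ℓ * ‖d‖ * η := by
      rw [sub_add_cancel_left, norm_neg, norm_smul, Real.norm_of_nonneg hη.le]
      ring

section DotProduct

variable {ι : Type*} [Fintype ι]

theorem Matrix.IsSymm.mulVec_dotProduct_comm {R : Type*} [CommRing R] {A : Matrix ι ι R}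
    (hA : A.IsSymm) (x y : ι → R) : A *ᵥ x ⬝ᵥ y = A *ᵥ y ⬝ᵥ x := by
  rw [dotProduct_comm, dotProduct_mulVec, ← mulVec_transpose, hA.eq]

open scoped RealInnerProductSpace in
theorem abs_dotProduct_mulVec_le [DecidableEq ι] (A : Matrix ι ι ℝ) (x y : EuclideanSpace ℝ ι) :
    |x ⬝ᵥ A *ᵥ y| ≤ ‖toEuclideanCLM (𝕜 := ℝ) A‖ * ‖x‖ * ‖y‖ := by
  rw [← inner_toEuclideanCLM]
  calc |⟪x, toEuclideanCLM (𝕜 := ℝ) A y⟫| ≤ ‖x‖ * ‖toEuclideanCLM (𝕜 := ℝ) A y‖ :=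
        abs_real_inner_le_norm _ _
    _ ≤ ‖x‖ * (‖toEuclideanCLM (𝕜 := ℝ) A‖ * ‖y‖) := by
        gcongr
        exact ContinuousLinearMap.le_opNorm _ _
    _ = _ := by ring

theorem dotProduct_self_nonneg (v : ι → ℝ) : 0 ≤ v ⬝ᵥ v :=
  Finset.sum_nonneg fun i _ => mul_self_nonneg (v i)

theorem dotProduct_self_pos {v : ι → ℝ} (hv : v ≠ 0) : 0 < v ⬝ᵥ v :=
  (dotProduct_self_nonneg v).lt_of_ne (Ne.symm (dotProduct_self_eq_zero.not.mpr hv))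

end DotProduct

section PerturbedKKT

variable {ι : Type*} [Fintype ι] {D A : Matrix ι ι ℝ} {g v z : ι → ℝ} {γ η μ : ℝ}

theorem kkt_multiplier_le (hgv : 0 ≤ g ⬝ᵥ v) (hη : 0 ≤ η) (hμ : 0 ≤ μ)
    (hstat : D *ᵥ z + η • v + μ • (g + A *ᵥ z) = 0) (hsmall : |g ⬝ᵥ A *ᵥ z| ≤ g ⬝ᵥ g / 2) :
    μ * (g ⬝ᵥ g) ≤ 2 * |g ⬝ᵥ D *ᵥ z| := by
  have hg := congrArg (g ⬝ᵥ ·) hstat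
  simp only [dotProduct_add, dotProduct_smul, smul_eq_mul, dotProduct_zero] at hg
  linarith [neg_abs_le (g ⬝ᵥ D *ᵥ z), mul_nonneg hη hgv, mul_le_mul_of_nonneg_left hsmall hμ,
    mul_le_mul_of_nonneg_left (neg_abs_le (g ⬝ᵥ A *ᵥ z)) hμ]

theorem kkt_sum_sq_le (hD : D.IsSymm) (hv : D *ᵥ v + γ • g = 0) (hgv : 0 ≤ g ⬝ᵥ v)
    (hγ : 0 ≤ γ) (hμ : 0 ≤ μ) (hstat : D *ᵥ z + η • v + μ • (g + A *ᵥ z) = 0)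
    (hfeas : g ⬝ᵥ z + 1 / 2 * (z ⬝ᵥ A *ᵥ z) + η * γ ≤ 0) :
    η * (v ⬝ᵥ v + γ ^ 2) ≤ μ * |v ⬝ᵥ A *ᵥ z| + γ / 2 * |z ⬝ᵥ A *ᵥ z| := by
  have hvD : v ⬝ᵥ D *ᵥ z = -γ * (g ⬝ᵥ z) := by
    rw [dotProduct_comm, ← hD.mulVec_dotProduct_comm, eq_neg_of_add_eq_zero_left hv]
    simp only [neg_dotProduct, smul_dotProduct, smul_eq_mul, neg_mul]
  have hvs := congrArg (v ⬝ᵥ ·) hstat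
  simp only [dotProduct_add, dotProduct_smul, smul_eq_mul, dotProduct_zero, hvD] at hvs
  rw [dotProduct_comm v g] at hvs
  linarith [mul_le_mul_of_nonneg_left hfeas hγ, mul_nonneg hμ hgv,
    mul_le_mul_of_nonneg_left (neg_abs_le (v ⬝ᵥ A *ᵥ z)) hμ,
    mul_le_mul_of_nonneg_left (neg_abs_le (z ⬝ᵥ A *ᵥ z)) hγ]

theorem kkt_sum_sq_le_norm_sq [DecidableEq ι] {z : EuclideanSpace ℝ ι} (hD : D.IsSymm)
    (hv : D *ᵥ v + γ • g = 0) (hgv : 0 ≤ g ⬝ᵥ v) (hγ : 0 ≤ γ) (hη : 0 ≤ η) (hμ : 0 ≤ μ)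
    (hstat : D *ᵥ z + η • v + μ • (g + A *ᵥ z) = 0)
    (hfeas : g ⬝ᵥ z + 1 / 2 * (z ⬝ᵥ A *ᵥ z) + η * γ ≤ 0) (hG : 0 < g ⬝ᵥ g)
    (hsmall : ‖toEuclideanCLM (𝕜 := ℝ) A‖ * ‖WithLp.toLp 2 g‖ * ‖z‖ ≤ g ⬝ᵥ g / 2) :
    η * (v ⬝ᵥ v + γ ^ 2) ≤
      (2 * ‖toEuclideanCLM (𝕜 := ℝ) D‖ * ‖WithLp.toLp 2 g‖ * ‖toEuclideanCLM (𝕜 := ℝ) A‖ *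
        ‖WithLp.toLp 2 v‖ / (g ⬝ᵥ g) + γ * ‖toEuclideanCLM (𝕜 := ℝ) A‖ / 2) * ‖z‖ ^ 2 := by
  set a := ‖toEuclideanCLM (𝕜 := ℝ) A‖
  set d := ‖toEuclideanCLM (𝕜 := ℝ) D‖
  set Ng := ‖WithLp.toLp 2 g‖
  have hgA := abs_dotProduct_mulVec_le A (WithLp.toLp 2 g) z
  have hgD := abs_dotProduct_mulVec_le D (WithLp.toLp 2 g) z
  have hμg := kkt_multiplier_le hgv hη hμ hstat (by linarith)
  have hμ_le : μ ≤ 2 * d * Ng * ‖z‖ / (g ⬝ᵥ g) := by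
    rw [le_div_iff₀ hG]
    linarith
  calc η * (v ⬝ᵥ v + γ ^ 2) ≤ μ * |v ⬝ᵥ A *ᵥ z| + γ / 2 * |z ⬝ᵥ A *ᵥ z| :=
        kkt_sum_sq_le hD hv hgv hγ hμ hstat hfeas
    _ ≤ 2 * d * Ng * ‖z‖ / (g ⬝ᵥ g) * (a * ‖WithLp.toLp 2 v‖ * ‖z‖) + γ / 2 * (a * ‖z‖ * ‖z‖) := by
        gcongr
        · exact abs_dotProduct_mulVec_le A (WithLp.toLp 2 v) z
        · exact abs_dotProduct_mulVec_le A z z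
    _ = _ := by ring

end PerturbedKKT

section QP

variable {n : ℕ} {D A : Matrix (Fin n) (Fin n) ℝ} {c b : Fin n → ℝ} {α : ℝ} {x₀ : En n}

theorem mem_Sqp_of_stationary (hF : Fq (D, c, A, b, α) x₀ ≤ 0) (hx₀ : D *ᵥ x₀ + c = 0) :
    x₀ ∈ Sqp (D, c, A, b, α) :=
  ⟨hF, 0, le_rfl, by simpa using hx₀, zero_mul _⟩

theorem Fq_add (hA : A.IsSymm) (x z : En n) :
    Fq (D, c, A, b, α) (x + z) =
      Fq (D, c, A, b, α) x + (A *ᵥ x + b) ⬝ᵥ z + 1 / 2 * (z ⬝ᵥ A *ᵥ z) := by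
  simp only [Fq, WithLp.ofLp_add, mulVec_add, add_dotProduct, dotProduct_add]
  rw [hA.mulVec_dotProduct_comm z x, dotProduct_comm z]
  ring

theorem perturbed_kkt_of_mem_Sqp (hA : A.IsSymm) (hF : Fq (D, c, A, b, α) x₀ = 0)
    (hstat : D *ᵥ x₀ + c = 0) {z : En n} {v : Fin n → ℝ} {γ η : ℝ}
    (hz : x₀ + z ∈ Sqp ((D, c, A, b, α) + η • ((0, v, 0, 0, γ) : QPParam n))) :
    ∃ μ : ℝ, 0 ≤ μ ∧
      D *ᵥ z + η • v + μ • (A *ᵥ x₀ + b + A *ᵥ z) = 0 ∧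
      (A *ᵥ x₀ + b) ⬝ᵥ z + 1 / 2 * (z ⬝ᵥ A *ᵥ z) + η * γ ≤ 0 := by
  obtain ⟨hfeas, μ, hμ, hst, -⟩ := hz
  simp only [Prod.smul_mk, Prod.mk_add_mk, smul_zero, add_zero] at hfeas hst
  refine ⟨μ, hμ, ?_, ?_⟩
  · rw [WithLp.ofLp_add, mulVec_add, mulVec_add] at hst
    linear_combination (norm := module) hst - hstat
  · have hshift : Fq (D, c + η • v, A, b, α + η • γ) (x₀ + z) =
        Fq (D, c, A, b, α) (x₀ + z) + η * γ := by
      simp only [Fq, smul_eq_mul]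
      ring
    rw [hshift, Fq_add hA, hF] at hfeas
    linarith

theorem eventually_sum_sq_le_mul (hD : D.IsSymm) (hA : A.IsSymm)
    (hF : Fq (D, c, A, b, α) x₀ = 0) (hstat : D *ᵥ x₀ + c = 0) (hb : A *ᵥ x₀ + b ≠ 0)
    {v : Fin n → ℝ} {γ L : ℝ} (hv : D *ᵥ v + γ • (A *ᵥ x₀ + b) = 0)
    (hgv : 0 ≤ (A *ᵥ x₀ + b) ⬝ᵥ v) (hγ : 0 ≤ γ)
    (hL : ∀ᶠ η in 𝓝[>] (0 : ℝ),
      ∃ y ∈ Sqp ((D, c, A, b, α) + η • ((0, v, 0, 0, γ) : QPParam n)), ‖y - x₀‖ ≤ L * η) :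
    ∃ K, ∀ᶠ η in 𝓝[>] (0 : ℝ), v ⬝ᵥ v + γ ^ 2 ≤ K * η := by
  set g := A *ᵥ x₀ + b
  have hG : 0 < g ⬝ᵥ g := dotProduct_self_pos hb
  set a := ‖toEuclideanCLM (𝕜 := ℝ) A‖
  set Ng := ‖WithLp.toLp 2 g‖
  set K := 2 * ‖toEuclideanCLM (𝕜 := ℝ) D‖ * Ng * a * ‖WithLp.toLp 2 v‖ / (g ⬝ᵥ g) + γ * a / 2
  have hsmall : ∀ᶠ η in 𝓝[>] (0 : ℝ), a * Ng * (L * η) < g ⬝ᵥ g / 2 := by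
    have hlim : Tendsto (fun η : ℝ => a * Ng * (L * η)) (𝓝[>] 0) (𝓝 0) := by
      have : Continuous (fun η : ℝ => a * Ng * (L * η)) := by fun_prop
      simpa using (this.tendsto 0).mono_left nhdsWithin_le_nhds
    exact hlim.eventually (gt_mem_nhds (half_pos hG))
  refine ⟨K * L ^ 2, ?_⟩
  filter_upwards [hL, hsmall, self_mem_nhdsWithin] with η ⟨y, hy, hyL⟩ hηsmall hη
  rw [← add_sub_cancel x₀ y] at hy
  obtain ⟨μ, hμ, hst, hfeas⟩ := perturbed_kkt_of_mem_Sqp hA hF hstat hy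
  have hzsmall : a * Ng * ‖y - x₀‖ ≤ g ⬝ᵥ g / 2 := by
    have : a * Ng * ‖y - x₀‖ ≤ a * Ng * (L * η) := by gcongr
    linarith
  have hηQ : η * (v ⬝ᵥ v + γ ^ 2) ≤ η * (K * L ^ 2 * η) :=
    calc η * (v ⬝ᵥ v + γ ^ 2) ≤ K * ‖y - x₀‖ ^ 2 :=
          kkt_sum_sq_le_norm_sq hD hv hgv hγ hη.le hμ hst hfeas hG hzsmall
      _ ≤ K * (L * η) ^ 2 := by gcongr
      _ = η * (K * L ^ 2 * η) := by ring
  exact le_of_mul_le_mul_left hηQ hη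

end QP

theorem stmt4_general {n : ℕ}
    (D A : Matrix (Fin n) (Fin n) ℝ) (c b : Fin n → ℝ) (α : ℝ) (x0 : En n)
    (hD : D.IsSymm) (hA : A.IsSymm)
    (hF : Fq (D, c, A, b, α) x0 = 0)
    (hb : A.mulVec x0 + b ≠ 0)
    (hstat : D.mulVec x0 + c = 0)
    (hLip : LipschitzLike Sqp (D, c, A, b, α) x0) :
    ∀ v : Fin n → ℝ, ∀ γ : ℝ,
      D.mulVec v + γ • (A.mulVec x0 + b) = 0 →
      0 ≤ (A.mulVec x0 + b) ⬝ᵥ v → 0 ≤ γ → v = 0 ∧ γ = 0 := by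
  intro v γ hv hgv hγ
  obtain ⟨L, hL⟩ := hLip.eventually_exists_mem_norm_sub_le (mem_Sqp_of_stationary hF.le hstat)
    ((0, v, 0, 0, γ) : QPParam n)
  obtain ⟨K, hK⟩ := eventually_sum_sq_le_mul hD hA hF hstat hb hv hgv hγ hL
  have hQ : v ⬝ᵥ v + γ ^ 2 ≤ 0 := nonpos_of_eventually_le_mul hK
  have hvv : v ⬝ᵥ v = 0 := le_antisymm (by linarith [sq_nonneg γ]) (dotProduct_self_nonneg v)
  have hγγ : γ ^ 2 = 0 := le_antisymm (by linarith) (sq_nonneg γ)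
  exact ⟨dotProduct_self_eq_zero.mp hvv, pow_eq_zero_iff two_ne_zero |>.mp hγγ⟩

/-- For `(QP_w)` with `F(x0,w0) = 0`, `A x0 + b ≠ 0` and Lagrange
multiplier `λ = 0` (i.e. `D x0 + c = 0`): if `S` is locally Lipschitz-like around
`(w0, x0)`, then `Dv + γ(Ax0+b) = 0`, `(Ax0+b)ᵀv ≥ 0` and `γ ≥ 0` imply `v = 0`, `γ = 0`. -/
theorem stmt4 {n : ℕ} (hn : 1 ≤ n)
    (D A : Matrix (Fin n) (Fin n) ℝ) (c b : Fin n → ℝ) (α : ℝ) (x0 : En n)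
    (hD : D.IsSymm) (hA : A.IsSymm)
    (hF : Fq (D, c, A, b, α) x0 = 0)
    (hb : A.mulVec x0 + b ≠ 0)
    (hstat : D.mulVec x0 + c = 0)
    (hLip : LipschitzLike Sqp (D, c, A, b, α) x0) :
    ∀ v : Fin n → ℝ, ∀ γ : ℝ,
      D.mulVec v + γ • (A.mulVec x0 + b) = 0 →
      0 ≤ (A.mulVec x0 + b) ⬝ᵥ v → 0 ≤ γ → v = 0 ∧ γ = 0 :=
  stmt4_general D A c b α x0 hD hA hF hb hstat hLip
end
end

section
/- Let n ≥ 1 and let w̄=(D̄,c̄,Ā,b̄,ᾱ) be a parameter of (QP_w) with D̄, Ā real symmetric n×n matrices, c̄,b̄ ∈ ℝⁿ, ᾱ ∈ ℝ. Suppose x̄ ∈ ℝⁿ satisfies F(x̄,w̄) = 0, Āx̄+b̄ ≠ 0, and D̄x̄+c̄ = 0 (Lagrange multiplier λ = 0). Assume: (i) the (n+1)×(n+1) matrix [[D̄, Āx̄+b̄],[(Āx̄+b̄)ᵀ, 0]] has nonzero determinant; (ii) for all v ∈ ℝⁿ, γ ∈ ℝ, if D̄v + γ(Āx̄+b̄)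 = 0 and γ ≥ 0 then (Āx̄+b̄)ᵀv ≤ 0; (iii) for all v ∈ ℝⁿ, D̄v = 0 implies (Āx̄+b̄)ᵀv = 0. Then S is locally Lipschitz-like around (w̄,x̄). -/
/-!
The multiplier at `x̄` is `0`, and (i) with (iii) makes `D̄` invertible, so for `w` near `w̄` and
small `μ` the KKT equation `(D + μA)x + c + μb = 0` has a unique solution `x(w, μ)`, smooth in
`(w, μ)`. Near `(w̄, x̄)` the stationary points of `(QP_w)` are exactly the points `x(w, μ)` whose
multiplier `μ ≥ 0` is complementary to `ψ(w, μ) = F(x(w, μ), w)`. The slope `-∂ψ/∂μ` at `(w̄, 0)`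
is `uᵀD̄⁻¹u` with `u = Āx̄ + b̄`, which is `≥ 0` by (ii) and `≠ 0` by the Schur complement
formula for the determinant in (i). Hence `ψ(w, ·)` decreases at a uniform rate, and by the
intermediate value theorem the complementary multiplier for `w` can be chosen within
`O(‖w' - w‖)` of the one for `w'`; Lipschitz continuity of `x(w, μ)` gives the Aubin property.
-/

open Matrix

attribute [local instance] Matrix.normedAddCommGroup

noncomputable section

/-- The `(n+1)×(n+1)` block matrix `[[M, u], [uᵀ, 0]]`. -/
def blockMat {n : ℕ} (M : Matrix (Fin n) (Fin n) ℝ) (u : Fin n → ℝ) :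
    Matrix (Fin n ⊕ Unit) (Fin n ⊕ Unit) ℝ :=
  Matrix.fromBlocks M (Matrix.of fun i (_ : Unit) => u i)
    (Matrix.of fun (_ : Unit) j => u j) 0

open Set Filter Topology Metric NNReal Function

theorem exists_complementary_point_near {φ : ℝ → ℝ} {κ m δ : ℝ} (hm : 0 ≤ m)
    (hφ : ContinuousOn φ (Icc 0 (m + δ)))
    (hdec : ∀ s t, 0 ≤ s → s ≤ t → t ≤ m + δ → φ t ≤ φ s - κ * (t - s))
    (hle : φ m ≤ κ * δ) (hge : 0 < m → -(κ * δ) ≤ φ m) (hδ : 0 ≤ δ) :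
    ∃ μ, 0 ≤ μ ∧ μ ≤ m + δ ∧ |μ - m| ≤ δ ∧ φ μ ≤ 0 ∧ μ * φ μ = 0 := by
  set a := max 0 (m - δ)
  have ha : 0 ≤ a := le_max_left _ _
  have hma : m - δ ≤ a := le_max_right _ _
  have ham : a ≤ m := max_le hm (by linarith)
  rcases lt_or_ge (φ a) 0 with hneg | hnonneg
  · -- `a = m - δ > 0` would force `φ m < -κδ`
    have ha0 : a = 0 := by
      by_contra hne
      have haδ : a = m - δ := (max_choice 0 (m - δ)).resolve_left hne
      have := hdec a m (by positivity) ham (by linarith)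
      rw [haδ] at hneg this
      linarith [hge (by linarith [lt_of_le_of_ne ha (Ne.symm hne)])]
    refine ⟨0, le_rfl, by linarith, ?_, ha0 ▸ hneg.le, zero_mul _⟩
    rw [zero_sub, abs_neg, abs_of_nonneg hm]
    linarith
  · have hend : φ (m + δ) ≤ 0 := by
      linarith [hdec m (m + δ) hm (by linarith) le_rfl]
    obtain ⟨μ, ⟨haμ, hμ⟩, hφμ⟩ := intermediate_value_Icc' (by linarith) (hφ.mono
      (Icc_subset_Icc ha le_rfl)) ⟨hend, hnonneg⟩
    exact ⟨μ, ha.trans haμ, hμ, abs_le.2 ⟨by linarith, by linarith⟩, hφμ.le,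
      by rw [hφμ, mul_zero]⟩

section Complementarity

variable {P X : Type*} [NormedAddCommGroup P] [NormedAddCommGroup X]

theorem mk_mem_ball_zero {w w0 : P} {μ r : ℝ} (hw : w ∈ ball w0 r) (hμ : |μ| < r) :
    (w, μ) ∈ ball (w0, (0 : ℝ)) r := by
  rw [← ball_prod_same]
  exact mk_mem_prod hw (by rwa [mem_ball, dist_zero_right, Real.norm_eq_abs])

theorem lipschitzLike_of_complementarity {S : P → Set X} {G : P → ℝ → X} {ψ : P → ℝ → ℝ}
    {w0 : P} {x0 : X} {r κ : ℝ} {K L : ℝ≥0} (hr : 0 < r) (hκ : 0 < κ)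
    (hG : LipschitzOnWith K (uncurry G) (ball (w0, 0) r))
    (hψ : LipschitzOnWith L (uncurry ψ) (ball (w0, 0) r))
    (hdec : ∀ w ∈ ball w0 r, ∀ μ₁ μ₂, 0 ≤ μ₁ → μ₁ ≤ μ₂ → μ₂ < r →
      ψ w μ₂ ≤ ψ w μ₁ - κ * (μ₂ - μ₁))
    (hmem : ∀ w ∈ ball w0 r, ∀ μ, 0 ≤ μ → μ < r → ψ w μ ≤ 0 → μ * ψ w μ = 0 → G w μ ∈ S w)
    (hsmall : ∀ᶠ q in 𝓝 (w0, x0), q.2 ∈ S q.1 →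
      ∃ m, 0 ≤ m ∧ m < r / 2 ∧ q.2 = G q.1 m ∧ ψ q.1 m ≤ 0 ∧ m * ψ q.1 m = 0) :
    LipschitzLike S w0 x0 := by
  obtain ⟨V, hV, U, hU, hVU⟩ := mem_nhds_prod_iff.1 hsmall
  -- small enough that `δ = (L / κ) * ‖w' - w‖ < r / 2` for `w, w' ∈ ball w0 ρ`
  set ρ := min (r / 2) (r * κ / (4 * (L + 1)))
  have hρ : 0 < ρ := by positivity
  refine ⟨K * max 1 (L / κ) + 1, by positivity, U, hU, ball w0 ρ ∩ V,
    inter_mem (ball_mem_nhds _ hρ) hV, ?_⟩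
  rintro w ⟨hw, -⟩ w' ⟨hw', hw'V⟩ x ⟨hx, hxU⟩
  obtain ⟨m, hm0, hmr, rfl, hψm, hcompl⟩ :
      ∃ m, 0 ≤ m ∧ m < r / 2 ∧ x = G w' m ∧ ψ w' m ≤ 0 ∧ m * ψ w' m = 0 :=
    hVU (mk_mem_prod hw'V hxU) hx
  have hρr : ρ ≤ r / 2 := min_le_left _ _
  have hwr : w ∈ ball w0 r := ball_subset_ball (by linarith) hw
  have hw'r : w' ∈ ball w0 r := ball_subset_ball (by linarith) hw'
  set Δ := ‖w' - w‖
  set δ := L / κ * Δ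
  have hκδ : κ * δ = L * Δ := by simp only [δ]; field_simp
  have hΔ : Δ < 2 * ρ := by
    calc Δ = dist w' w := (dist_eq_norm _ _).symm
      _ ≤ dist w' w0 + dist w w0 := dist_triangle_right _ _ _
      _ < 2 * ρ := by linarith [mem_ball.1 hw, mem_ball.1 hw']
  have hδ : δ < r / 2 := by
    have hLρ : (L + 1) * (2 * ρ) ≤ r * κ / 2 := by
      have := min_le_right (r / 2) (r * κ / (4 * (L + 1)))
      rw [le_div_iff₀ (by positivity)] at this
      linarith
    rw [← mul_lt_mul_iff_right₀ hκ, hκδ]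
    nlinarith [norm_nonneg (w' - w)]
  have hclose : |ψ w m - ψ w' m| ≤ κ * δ := by
    rw [hκδ, ← Real.dist_eq]
    simpa [Prod.dist_eq, dist_eq_norm, norm_sub_rev w] using
      hψ.dist_le_mul (w, m) (mk_mem_ball_zero hwr (by rw [abs_of_nonneg hm0]; linarith))
        (w', m) (mk_mem_ball_zero hw'r (by rw [abs_of_nonneg hm0]; linarith))
  have hcont : ContinuousOn (ψ w) (Icc 0 (m + δ)) :=
    hψ.continuousOn.comp (Continuous.continuousOn (by fun_prop)) fun μ hμ =>
      mk_mem_ball_zero hwr (by rw [abs_of_nonneg hμ.1]; linarith [hμ.2])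
  obtain ⟨μ, hμ0, hμ, hμm, hψμ, hcμ⟩ := exists_complementary_point_near hm0 hcont
    (fun s t hs hst ht => hdec w hwr s t hs hst (by linarith))
    (by linarith [(abs_le.1 hclose).2])
    (fun hm => by linarith [(abs_le.1 hclose).1, (mul_eq_zero.1 hcompl).resolve_left hm.ne'])
    (by positivity)
  refine ⟨G w μ, hmem w hwr μ hμ0 (by linarith) hψμ hcμ, ?_⟩
  have hGd := hG.dist_le_mul (w', m) (mk_mem_ball_zero hw'r (by rw [abs_of_nonneg hm0]; linarith))
    (w, μ) (mk_mem_ball_zero hwr (by rw [abs_of_nonneg hμ0]; linarith))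
  rw [Prod.dist_eq, dist_eq_norm w', Real.dist_eq, abs_sub_comm] at hGd
  dsimp only at hGd
  calc ‖G w' m - G w μ‖ ≤ K * max Δ |μ - m| := by rw [← dist_eq_norm]; exact hGd
    _ ≤ K * (max 1 (L / κ) * Δ) := by
      gcongr
      rw [max_mul_of_nonneg _ _ (norm_nonneg _), one_mul]
      exact max_le_max le_rfl hμm
    _ ≤ (K * max 1 (L / κ) + 1) * Δ := by nlinarith [norm_nonneg (w' - w)]

theorem lipschitzLike_of_eventually_complementarity {S : P → Set X} {G : P → ℝ → X}
    {ψ : P → ℝ → ℝ} {w0 : P} {x0 : X} {κ : ℝ} (hκ : 0 < κ)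
    (hG : ∃ K, ∃ s ∈ 𝓝 (w0, (0 : ℝ)), LipschitzOnWith K (uncurry G) s)
    (hψ : ∃ L, ∃ s ∈ 𝓝 (w0, (0 : ℝ)), LipschitzOnWith L (uncurry ψ) s)
    (hdec : ∀ᶠ q in 𝓝 (w0, (0 : ℝ), (0 : ℝ)), q.2.1 ≤ q.2.2 →
      ψ q.1 q.2.2 ≤ ψ q.1 q.2.1 - κ * (q.2.2 - q.2.1))
    (hmem : ∀ᶠ p in 𝓝 (w0, (0 : ℝ)), 0 ≤ p.2 → ψ p.1 p.2 ≤ 0 → p.2 * ψ p.1 p.2 = 0 →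
      G p.1 p.2 ∈ S p.1)
    (hsmall : ∀ ε > 0, ∀ᶠ q in 𝓝 (w0, x0), q.2 ∈ S q.1 →
      ∃ m, 0 ≤ m ∧ m < ε ∧ q.2 = G q.1 m ∧ ψ q.1 m ≤ 0 ∧ m * ψ q.1 m = 0) :
    LipschitzLike S w0 x0 := by
  obtain ⟨K, sG, hsG, hK⟩ := hG
  obtain ⟨L, sψ, hsψ, hL⟩ := hψ
  obtain ⟨r₁, hr₁, hball⟩ := Metric.mem_nhds_iff.1 (inter_mem (inter_mem hsG hsψ) hmem)
  obtain ⟨r₂, hr₂, hdec⟩ := Metric.eventually_nhds_iff.1 hdec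
  have hr : 0 < min r₁ r₂ := lt_min hr₁ hr₂
  have hsub : ball (w0, (0 : ℝ)) (min r₁ r₂) ⊆ (sG ∩ sψ) ∩ _ :=
    (ball_subset_ball (min_le_left _ _)).trans hball
  refine lipschitzLike_of_complementarity hr hκ (hK.mono fun p hp => (hsub hp).1.1)
    (hL.mono fun p hp => (hsub hp).1.2) ?_ ?_ (hsmall _ (half_pos hr))
  · intro w hw μ₁ μ₂ h₁ h₁₂ h₂
    refine hdec (y := (w, μ₁, μ₂)) ?_ h₁₂
    have := mem_ball.1 hw
    simp only [Prod.dist_eq, Real.dist_0_eq_abs, abs_of_nonneg h₁, abs_of_nonneg (h₁.trans h₁₂),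
      max_lt_iff]
    exact ⟨this.trans_le (min_le_right _ _), by linarith [min_le_right r₁ r₂],
      h₂.trans_le (min_le_right _ _)⟩
  · intro w hw μ hμ hμr
    exact (hsub (mk_mem_ball_zero hw (by rwa [abs_of_nonneg hμ]))).2 hμ

end Complementarity

attribute [local instance] Matrix.normedSpace

section MatrixContDiff

variable {𝕜 E ι m : Type*} [NontriviallyNormedField 𝕜] [NormedAddCommGroup E] [NormedSpace 𝕜 E]
  [Fintype ι] [Fintype m] {k : WithTop ℕ∞} {x : E}

theorem contDiff_det [DecidableEq ι] : ContDiff 𝕜 k (Matrix.det : Matrix ι ι 𝕜 → 𝕜) := by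
  simp_rw [funext Matrix.det_apply']
  fun_prop

theorem contDiff_adjugate [DecidableEq ι] :
    ContDiff 𝕜 k (Matrix.adjugate : Matrix ι ι 𝕜 → Matrix ι ι 𝕜) := by
  refine contDiff_pi.2 fun i => contDiff_pi.2 fun j => ?_
  simp_rw [Matrix.adjugate_apply]
  refine contDiff_det.comp (contDiff_pi.2 fun a => contDiff_pi.2 fun b => ?_)
  by_cases hab : a = j
  · simp only [Matrix.updateRow_apply, hab, if_true]
    exact contDiff_const
  · simp only [Matrix.updateRow_apply, hab, if_false]
    exact contDiff_apply_apply 𝕜 𝕜 a b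

@[fun_prop]
theorem ContDiffAt.dotProduct {f g : E → ι → 𝕜} (hf : ContDiffAt 𝕜 k f x)
    (hg : ContDiffAt 𝕜 k g x) : ContDiffAt 𝕜 k (fun y => f y ⬝ᵥ g y) x :=
  ContDiffAt.sum fun i _ => (contDiffAt_pi.1 hf i).mul (contDiffAt_pi.1 hg i)

@[fun_prop]
theorem ContDiffAt.matrix_mulVec {f : E → Matrix m ι 𝕜} {g : E → ι → 𝕜}
    (hf : ContDiffAt 𝕜 k f x) (hg : ContDiffAt 𝕜 k g x) :
    ContDiffAt 𝕜 k (fun y => f y *ᵥ g y) x :=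
  contDiffAt_pi.2 fun i => (contDiffAt_pi.1 hf i).dotProduct hg

theorem ContDiffAt.matrix_inv [DecidableEq ι] {f : E → Matrix ι ι 𝕜} (hf : ContDiffAt 𝕜 k f x)
    (hx : (f x).det ≠ 0) : ContDiffAt 𝕜 k (fun y => (f y)⁻¹) x := by
  simp_rw [Matrix.inv_def, Ring.inverse_eq_inv']
  exact ((contDiff_det.contDiffAt.comp x hf).inv hx).smul (contDiff_adjugate.contDiffAt.comp x hf)

end MatrixContDiff

theorem eventually_lt_of_add_smul_eq_zero {Y Z : Type*} [TopologicalSpace Y]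
    [NormedAddCommGroup Z] [NormedSpace ℝ Z] {f g : Y → Z} {y0 : Y} (hf : ContinuousAt f y0)
    (hg : ContinuousAt g y0) (hf0 : f y0 = 0) (hg0 : g y0 ≠ 0) {ε : ℝ} (hε : 0 < ε) :
    ∀ᶠ y in 𝓝 y0, ∀ m : ℝ, 0 ≤ m → f y + m • g y = 0 → m < ε := by
  have hη : 0 < ‖g y0‖ := norm_pos_iff.2 hg0
  have hg' : ∀ᶠ y in 𝓝 y0, ‖g y0‖ / 2 < ‖g y‖ :=
    hg.norm.eventually (lt_mem_nhds (half_lt_self hη))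
  have hf' : ∀ᶠ y in 𝓝 y0, ‖f y‖ < ε * (‖g y0‖ / 2) :=
    hf.norm.eventually (gt_mem_nhds (by simp only [hf0, norm_zero]; positivity))
  filter_upwards [hg', hf'] with y hgy hfy m hm hfg
  have hmg : m * ‖g y‖ = ‖f y‖ := by
    rw [eq_neg_of_add_eq_zero_left hfg, norm_neg, norm_smul, Real.norm_of_nonneg hm]
  by_contra! hεm
  have h₁ := mul_lt_mul_of_pos_left hgy hε
  have h₂ := mul_le_mul_of_nonneg_right hεm (norm_nonneg (g y))
  linarith

section BorderedMatrix

variable {n : ℕ} {M : Matrix (Fin n) (Fin n) ℝ} {u : Fin n → ℝ}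

theorem det_ne_zero_of_det_blockMat_ne_zero (h : (blockMat M u).det ≠ 0)
    (hker : ∀ v, M *ᵥ v = 0 → u ⬝ᵥ v = 0) : M.det ≠ 0 := by
  intro hM
  obtain ⟨v, hv, hMv⟩ := Matrix.exists_mulVec_eq_zero_iff.2 hM
  refine h (Matrix.exists_mulVec_eq_zero_iff.1 ⟨Sum.elim v 0, fun h0 => hv ?_, ?_⟩)
  · funext i; simpa using congrFun h0 (Sum.inl i)
  · funext i
    rcases i with i | i
    · simp [blockMat, Matrix.fromBlocks_mulVec, hMv]
    · simp only [blockMat, Matrix.fromBlocks_mulVec, Sum.elim_inr, Matrix.zero_mulVec, add_zero]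
      exact hker v hMv

theorem det_blockMat (h : IsUnit M.det) :
    (blockMat M u).det = -(M.det * (u ⬝ᵥ M⁻¹ *ᵥ u)) := by
  have := M.invertibleOfIsUnitDet h
  rw [blockMat, Matrix.det_fromBlocks₁₁, Matrix.det_unique (A := (0 - _ : Matrix Unit Unit ℝ)),
    Matrix.invOf_eq_nonsing_inv]
  simp only [Matrix.sub_apply, Matrix.zero_apply, zero_sub, Matrix.mul_apply, Matrix.of_apply,
    dotProduct, Matrix.mulVec, Finset.mul_sum, Finset.sum_mul, mul_neg, neg_inj]
  rw [Finset.sum_comm]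
  ring_nf

theorem dotProduct_inv_mulVec_pos (h : (blockMat M u).det ≠ 0)
    (hcone : ∀ v : Fin n → ℝ, ∀ γ : ℝ, M *ᵥ v + γ • u = 0 → 0 ≤ γ → u ⬝ᵥ v ≤ 0)
    (hker : ∀ v, M *ᵥ v = 0 → u ⬝ᵥ v = 0) : 0 < u ⬝ᵥ (M⁻¹ *ᵥ u) := by
  have hM := isUnit_iff_ne_zero.2 (det_ne_zero_of_det_blockMat_ne_zero h hker)
  have hnonneg := hcone (-(M⁻¹ *ᵥ u)) 1 (by
    rw [Matrix.mulVec_neg, Matrix.mulVec_mulVec, Matrix.mul_nonsing_inv _ hM, Matrix.one_mulVec,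
      one_smul, neg_add_cancel]) zero_le_one
  rw [dotProduct_neg, neg_nonpos] at hnonneg
  refine hnonneg.lt_of_ne fun h0 => h ?_
  rw [det_blockMat hM, ← h0, mul_zero, neg_zero]

end BorderedMatrix

namespace QPParam

variable {n : ℕ} {k : WithTop ℕ∞}

/- For `w = (D, c, A, b, α)`: `kktMatrix w μ = D + μA` and `kktVector w μ = c + μb`, so
`stationaryPoint w μ` solves the KKT equation with multiplier `μ` whenever `D + μA` is invertible.
`constraintSlope` is the difference quotient of `-constraintAt w` between `μ₁` and `μ₂`. -/

def kktMatrix (w : QPParam n) (μ : ℝ) : Matrix (Fin n) (Fin n) ℝ := w.1 + μ • w.2.2.1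

def kktVector (w : QPParam n) (μ : ℝ) : Fin n → ℝ := w.2.1 + μ • w.2.2.2.1

def stationaryPoint (w : QPParam n) (μ : ℝ) : En n :=
  WithLp.toLp 2 (-((kktMatrix w μ)⁻¹ *ᵥ kktVector w μ))

def constraintAt (w : QPParam n) (μ : ℝ) : ℝ := Fq w (stationaryPoint w μ)

def stationaryStep (w : QPParam n) (μ₁ μ₂ : ℝ) : Fin n → ℝ :=
  (kktMatrix w μ₂)⁻¹ *ᵥ (w.2.2.1 *ᵥ (stationaryPoint w μ₁).ofLp + w.2.2.2.1)

def constraintSlope (w : QPParam n) (μ₁ μ₂ : ℝ) : ℝ :=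
  (1 / 2) * (w.2.2.1 *ᵥ stationaryStep w μ₁ μ₂ ⬝ᵥ (stationaryPoint w μ₂).ofLp)
    + (1 / 2) * (w.2.2.1 *ᵥ (stationaryPoint w μ₁).ofLp ⬝ᵥ stationaryStep w μ₁ μ₂)
    + w.2.2.2.1 ⬝ᵥ stationaryStep w μ₁ μ₂

theorem kktMatrix_mulVec_add_kktVector (w : QPParam n) (μ : ℝ) (x : Fin n → ℝ) :
    kktMatrix w μ *ᵥ x + kktVector w μ
      = w.1 *ᵥ x + w.2.1 + μ • (w.2.2.1 *ᵥ x + w.2.2.2.1) := by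
  simp only [kktMatrix, kktVector, Matrix.add_mulVec, Matrix.smul_mulVec, smul_add]
  abel

theorem kktMatrix_mulVec_stationaryPoint {w : QPParam n} {μ : ℝ}
    (h : IsUnit (kktMatrix w μ).det) :
    kktMatrix w μ *ᵥ (stationaryPoint w μ).ofLp = -kktVector w μ := by
  rw [stationaryPoint, Matrix.mulVec_neg, Matrix.mulVec_mulVec, Matrix.mul_nonsing_inv _ h,
    Matrix.one_mulVec]

theorem stationaryPoint_spec {w : QPParam n} {μ : ℝ} (h : IsUnit (kktMatrix w μ).det) :
    w.1 *ᵥ (stationaryPoint w μ).ofLp + w.2.1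
      + μ • (w.2.2.1 *ᵥ (stationaryPoint w μ).ofLp + w.2.2.2.1) = 0 := by
  rw [← kktMatrix_mulVec_add_kktVector, kktMatrix_mulVec_stationaryPoint h, neg_add_cancel]

theorem eq_stationaryPoint {w : QPParam n} {μ : ℝ} (h : IsUnit (kktMatrix w μ).det) {x : En n}
    (hx : w.1 *ᵥ x.ofLp + w.2.1 + μ • (w.2.2.1 *ᵥ x.ofLp + w.2.2.2.1) = 0) :
    x = stationaryPoint w μ := by
  rw [← kktMatrix_mulVec_add_kktVector, add_eq_zero_iff_eq_neg,
    ← kktMatrix_mulVec_stationaryPoint h] at hx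
  exact WithLp.ofLp_injective 2
    (Matrix.mulVec_injective_iff_isUnit.2 ((Matrix.isUnit_iff_isUnit_det _).2 h) hx)

theorem stationaryPoint_mem_Sqp {w : QPParam n} {μ : ℝ} (h : IsUnit (kktMatrix w μ).det)
    (hμ : 0 ≤ μ) (hle : constraintAt w μ ≤ 0) (hcompl : μ * constraintAt w μ = 0) :
    stationaryPoint w μ ∈ Sqp w :=
  ⟨hle, μ, hμ, stationaryPoint_spec h, hcompl⟩

theorem stationaryPoint_sub {w : QPParam n} {μ₁ μ₂ : ℝ} (h₁ : IsUnit (kktMatrix w μ₁).det)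
    (h₂ : IsUnit (kktMatrix w μ₂).det) :
    (stationaryPoint w μ₂).ofLp - (stationaryPoint w μ₁).ofLp
      = -(μ₂ - μ₁) • stationaryStep w μ₁ μ₂ := by
  have hM : kktMatrix w μ₂ = kktMatrix w μ₁ + (μ₂ - μ₁) • w.2.2.1 := by
    simp only [kktMatrix]; module
  have hv : kktVector w μ₂ = kktVector w μ₁ + (μ₂ - μ₁) • w.2.2.2.1 := by
    simp only [kktVector]; module
  apply Matrix.mulVec_injective_iff_isUnit.2 ((Matrix.isUnit_iff_isUnit_det _).2 h₂)
  rw [stationaryStep, Matrix.mulVec_smul, Matrix.mulVec_mulVec, Matrix.mul_nonsing_inv _ h₂,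
    Matrix.one_mulVec, Matrix.mulVec_sub, kktMatrix_mulVec_stationaryPoint h₂, hv, hM,
    Matrix.add_mulVec, kktMatrix_mulVec_stationaryPoint h₁, Matrix.smul_mulVec]
  module

theorem Fq_sub (w : QPParam n) (x y : En n) :
    Fq w y - Fq w x = (1 / 2) * (w.2.2.1 *ᵥ (y.ofLp - x.ofLp) ⬝ᵥ y.ofLp)
      + (1 / 2) * (w.2.2.1 *ᵥ x.ofLp ⬝ᵥ (y.ofLp - x.ofLp)) + w.2.2.2.1 ⬝ᵥ (y.ofLp - x.ofLp) := by
  simp only [Fq, Matrix.mulVec_sub, sub_dotProduct, dotProduct_sub]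
  ring

theorem constraintAt_sub {w : QPParam n} {μ₁ μ₂ : ℝ} (h₁ : IsUnit (kktMatrix w μ₁).det)
    (h₂ : IsUnit (kktMatrix w μ₂).det) :
    constraintAt w μ₂ - constraintAt w μ₁ = -(μ₂ - μ₁) * constraintSlope w μ₁ μ₂ := by
  rw [constraintAt, constraintAt, Fq_sub, stationaryPoint_sub h₁ h₂, constraintSlope]
  simp only [Matrix.mulVec_smul, smul_dotProduct, dotProduct_smul, smul_eq_mul]
  ring

theorem contDiff_kktMatrix : ContDiff ℝ k (uncurry (kktMatrix (n := n))) := by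
  unfold uncurry kktMatrix; fun_prop

theorem contDiff_kktVector : ContDiff ℝ k (uncurry (kktVector (n := n))) := by
  unfold uncurry kktVector; fun_prop

theorem contDiffAt_stationaryPoint {w : QPParam n} {μ : ℝ} (h : (kktMatrix w μ).det ≠ 0) :
    ContDiffAt ℝ k (uncurry stationaryPoint) (w, μ) :=
  PiLp.contDiff_toLp.contDiffAt.comp _
    ((contDiff_kktMatrix.contDiffAt (x := (w, μ)).matrix_inv h).matrix_mulVec
      contDiff_kktVector.contDiffAt).neg

theorem contDiffAt_constraintAt {w : QPParam n} {μ : ℝ} (h : (kktMatrix w μ).det ≠ 0) :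
    ContDiffAt ℝ k (uncurry constraintAt) (w, μ) := by
  have hx : ContDiffAt ℝ k (fun p : QPParam n × ℝ => (stationaryPoint p.1 p.2).ofLp) (w, μ) :=
    PiLp.contDiff_ofLp.contDiffAt.comp _ (contDiffAt_stationaryPoint h)
  unfold uncurry constraintAt Fq
  fun_prop

theorem contDiffAt_constraintSlope {w : QPParam n} {μ₁ μ₂ : ℝ} (h₁ : (kktMatrix w μ₁).det ≠ 0)
    (h₂ : (kktMatrix w μ₂).det ≠ 0) :
    ContDiffAt ℝ k (fun q : QPParam n × ℝ × ℝ => constraintSlope q.1 q.2.1 q.2.2) (w, μ₁, μ₂) := by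
  have hy₁ := PiLp.contDiff_ofLp.contDiffAt.comp (w, μ₁, μ₂)
    ((contDiffAt_stationaryPoint (k := k) h₁).comp (w, μ₁, μ₂)
      (contDiff_fst.prodMk contDiff_snd.fst).contDiffAt)
  have hy₂ := PiLp.contDiff_ofLp.contDiffAt.comp (w, μ₁, μ₂)
    ((contDiffAt_stationaryPoint (k := k) h₂).comp (w, μ₁, μ₂)
      (contDiff_fst.prodMk contDiff_snd.snd).contDiffAt)
  simp only [Function.comp_def, uncurry] at hy₁ hy₂
  have hM : ContDiffAt ℝ k (fun q : QPParam n × ℝ × ℝ => (kktMatrix q.1 q.2.2)⁻¹) (w, μ₁, μ₂) :=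
    ((contDiff_kktMatrix.comp (contDiff_fst.prodMk contDiff_snd.snd)).contDiffAt).matrix_inv h₂
  unfold constraintSlope stationaryStep
  fun_prop

theorem eventually_isUnit_det_kktMatrix {w : QPParam n} {μ : ℝ} (h : (kktMatrix w μ).det ≠ 0) :
    ∀ᶠ p in 𝓝 (w, μ), IsUnit (kktMatrix p.1 p.2).det := by
  have : ContinuousAt (fun p : QPParam n × ℝ => (kktMatrix p.1 p.2).det) (w, μ) :=
    (contDiff_det.comp (contDiff_kktMatrix (k := 0))).continuous.continuousAt
  exact (this.eventually_ne h).mono fun p => isUnit_iff_ne_zero.2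

theorem eventually_constraintAt_le_sub {w0 : QPParam n} {κ : ℝ} (h : (kktMatrix w0 0).det ≠ 0)
    (hκ : κ < constraintSlope w0 0 0) :
    ∀ᶠ q in 𝓝 (w0, (0 : ℝ), (0 : ℝ)), q.2.1 ≤ q.2.2 →
      constraintAt q.1 q.2.2 ≤ constraintAt q.1 q.2.1 - κ * (q.2.2 - q.2.1) := by
  have hunit := eventually_isUnit_det_kktMatrix h
  have h₁ : Tendsto (fun q : QPParam n × ℝ × ℝ => (q.1, q.2.1)) (𝓝 (w0, 0, 0)) (𝓝 (w0, 0)) :=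
    (continuous_fst.prodMk continuous_snd.fst).tendsto' _ _ rfl
  have h₂ : Tendsto (fun q : QPParam n × ℝ × ℝ => (q.1, q.2.2)) (𝓝 (w0, 0, 0)) (𝓝 (w0, 0)) :=
    (continuous_fst.prodMk continuous_snd.snd).tendsto' _ _ rfl
  filter_upwards [h₁.eventually hunit, h₂.eventually hunit,
    (contDiffAt_constraintSlope (k := 0) h h).continuousAt.eventually (lt_mem_nhds hκ)]
    with q hq₁ hq₂ hslope hle
  have := mul_le_mul_of_nonneg_left hslope.le (sub_nonneg.2 hle)
  linarith [constraintAt_sub hq₁ hq₂]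

theorem eventually_stationaryPoint_mem_Sqp {w0 : QPParam n} (h : (kktMatrix w0 0).det ≠ 0) :
    ∀ᶠ p in 𝓝 (w0, (0 : ℝ)), 0 ≤ p.2 → constraintAt p.1 p.2 ≤ 0 →
      p.2 * constraintAt p.1 p.2 = 0 → stationaryPoint p.1 p.2 ∈ Sqp p.1 :=
  (eventually_isUnit_det_kktMatrix h).mono fun _ hp => stationaryPoint_mem_Sqp hp

theorem eventually_eq_stationaryPoint_of_mem_Sqp {w0 : QPParam n} {x0 : En n}
    (h : (kktMatrix w0 0).det ≠ 0) (hstat : w0.1 *ᵥ x0.ofLp + w0.2.1 = 0)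
    (hb : w0.2.2.1 *ᵥ x0.ofLp + w0.2.2.2.1 ≠ 0) {ε : ℝ} (hε : 0 < ε) :
    ∀ᶠ q in 𝓝 (w0, x0), q.2 ∈ Sqp q.1 → ∃ m, 0 ≤ m ∧ m < ε ∧ q.2 = stationaryPoint q.1 m ∧
      constraintAt q.1 m ≤ 0 ∧ m * constraintAt q.1 m = 0 := by
  obtain ⟨ρ, hρ, hunit⟩ := Metric.eventually_nhds_iff.1 (eventually_isUnit_det_kktMatrix h)
  have hmult := eventually_lt_of_add_smul_eq_zero
    (f := fun q : QPParam n × En n => q.1.1 *ᵥ q.2.ofLp + q.1.2.1)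
    (g := fun q : QPParam n × En n => q.1.2.2.1 *ᵥ q.2.ofLp + q.1.2.2.2.1)
    (Continuous.continuousAt (by fun_prop)) (Continuous.continuousAt (by fun_prop)) hstat hb
    (y0 := (w0, x0)) (lt_min hε hρ)
  filter_upwards [hmult, continuous_fst.continuousAt.eventually (ball_mem_nhds w0 hρ)]
    with q hmult hw hx
  obtain ⟨hF, m, hm, hKKT, hcompl⟩ := hx
  have hmρ := hmult m hm hKKT
  have hmρ' : |m| < ρ := by rw [abs_of_nonneg hm]; exact hmρ.trans_le (min_le_right _ _)
  have hx := eq_stationaryPoint (hunit (mk_mem_ball_zero hw hmρ')) hKKT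
  refine ⟨m, hm, hmρ.trans_le (min_le_left _ _), hx, ?_⟩
  rw [constraintAt, ← hx]
  exact ⟨hF, hcompl⟩

theorem constraintSlope_zero {w : QPParam n} (hA : w.2.2.1.IsSymm) :
    constraintSlope w 0 0
      = (w.2.2.1 *ᵥ (stationaryPoint w 0).ofLp + w.2.2.2.1)
        ⬝ᵥ (w.1⁻¹ *ᵥ (w.2.2.1 *ᵥ (stationaryPoint w 0).ofLp + w.2.2.2.1)) := by
  have hM : kktMatrix w 0 = w.1 := by simp [kktMatrix]
  rw [constraintSlope, stationaryStep, hM]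
  set y := (stationaryPoint w 0).ofLp
  set z := w.1⁻¹ *ᵥ (w.2.2.1 *ᵥ y + w.2.2.2.1)
  have hsymm : w.2.2.1 *ᵥ z ⬝ᵥ y = w.2.2.1 *ᵥ y ⬝ᵥ z := by
    rw [dotProduct_comm, Matrix.dotProduct_mulVec, ← Matrix.mulVec_transpose, hA.eq]
  rw [hsymm, add_dotProduct]
  ring

end QPParam

open QPParam in
theorem stmt5_general {n : ℕ}
    (D A : Matrix (Fin n) (Fin n) ℝ) (c b : Fin n → ℝ) (α : ℝ) (x0 : En n)
    (hA : A.IsSymm)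
    (hb : A.mulVec x0 + b ≠ 0)
    (hstat : D.mulVec x0 + c = 0)
    (h1 : (blockMat D (A.mulVec x0 + b)).det ≠ 0)
    (h2 : ∀ v : Fin n → ℝ, ∀ γ : ℝ,
      D.mulVec v + γ • (A.mulVec x0 + b) = 0 → 0 ≤ γ →
      (A.mulVec x0 + b) ⬝ᵥ v ≤ 0)
    (h3 : ∀ v : Fin n → ℝ, D.mulVec v = 0 → (A.mulVec x0 + b) ⬝ᵥ v = 0) :
    LipschitzLike Sqp (D, c, A, b, α) x0 := by
  set w0 : QPParam n := (D, c, A, b, α)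
  have hM : kktMatrix w0 0 = D := by simp [kktMatrix, w0]
  have hdet : (kktMatrix w0 0).det ≠ 0 := hM ▸ det_ne_zero_of_det_blockMat_ne_zero h1 h3
  have hx0 : x0 = stationaryPoint w0 0 :=
    eq_stationaryPoint (isUnit_iff_ne_zero.2 hdet) (by simpa [w0] using hstat)
  have hslope : 0 < constraintSlope w0 0 0 := by
    rw [constraintSlope_zero hA, ← hx0]
    exact dotProduct_inv_mulVec_pos h1 h2 h3
  exact lipschitzLike_of_eventually_complementarity (half_pos hslope)
    (contDiffAt_stationaryPoint hdet).exists_lipschitzOnWith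
    (contDiffAt_constraintAt hdet).exists_lipschitzOnWith
    (eventually_constraintAt_le_sub hdet (half_lt_self hslope))
    (eventually_stationaryPoint_mem_Sqp hdet)
    fun ε hε => eventually_eq_stationaryPoint_of_mem_Sqp hdet hstat hb hε

/-- For `(QP_w)` with `F(x0,w0) = 0`, `A x0 + b ≠ 0` and Lagrange
multiplier `λ = 0`: under conditions (i)–(iii), `S` is locally Lipschitz-like
around `(w0, x0)`. -/
theorem stmt5 {n : ℕ} (hn : 1 ≤ n)
    (D A : Matrix (Fin n) (Fin n) ℝ) (c b : Fin n → ℝ) (α : ℝ) (x0 : En n)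
    (hD : D.IsSymm) (hA : A.IsSymm)
    (hF : Fq (D, c, A, b, α) x0 = 0)
    (hb : A.mulVec x0 + b ≠ 0)
    (hstat : D.mulVec x0 + c = 0)
    (h1 : (blockMat D (A.mulVec x0 + b)).det ≠ 0)
    (h2 : ∀ v : Fin n → ℝ, ∀ γ : ℝ,
      D.mulVec v + γ • (A.mulVec x0 + b) = 0 → 0 ≤ γ →
      (A.mulVec x0 + b) ⬝ᵥ v ≤ 0)
    (h3 : ∀ v : Fin n → ℝ, D.mulVec v = 0 → (A.mulVec x0 + b) ⬝ᵥ v = 0) :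
    LipschitzLike Sqp (D, c, A, b, α) x0 :=
  stmt5_general D A c b α x0 hA hb hstat h1 h2 h3
end
end

section
/- Let f₀,F : ℝⁿ×ℝ^d → ℝ be C² functions and let (x̄,w̄) satisfy F(x̄,w̄) < 0 and ∇ₓf₀(x̄,w̄) = 0 (so x̄ ∈ S(w̄)). If the Hessian ∇²ₓₓf₀(x̄,w̄), regarded as a linear map from ℝⁿ to ℝⁿ, has trivial kernel, then the stationary point set map S has the Robinson stability at ω₀=(x̄,w̄,0). -/
noncomputable section

/-- The partial gradient in `x` of a function `f : ℝⁿ × ℝ^d → ℝ`. -/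
def gradx {n d : ℕ} (f : En n × En d → ℝ) (x : En n) (w : En d) : En n :=
  gradient (fun y => f (y, w)) x

/-- The stationary (KKT) point set `S(w)` of the problem
`minimize f₀(x,w) subject to F(x,w) ≤ 0`. -/
def Sgen {n d : ℕ} (f₀ F : En n × En d → ℝ) (w : En d) : Set (En n) :=
  {x | F (x, w) ≤ 0 ∧ ∃ μ : ℝ, 0 ≤ μ ∧
    gradx f₀ x w + μ • gradx F x w = 0 ∧ μ * F (x, w) = 0}

/-- The set `Φ(x,w) = {∇ₓf₀(x,w) + μ∇ₓF(x,w) : μ ≥ 0, μ·F(x,w) = 0}` when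
`F(x,w) ≤ 0` (and `∅` otherwise). -/
def PhiGen {n d : ℕ} (f₀ F : En n × En d → ℝ) (x : En n) (w : En d) : Set (En n) :=
  {z | F (x, w) ≤ 0 ∧ ∃ μ : ℝ, 0 ≤ μ ∧ μ * F (x, w) = 0 ∧
    z = gradx f₀ x w + μ • gradx F x w}

/-- `S` has the Robinson stability at `ω₀ = (x0, w0, 0)`: there exist `r > 0`, `γ > 0`
and neighborhoods `U` of `x0`, `V` of `w0` such that `d(x, S(w)) ≤ r · d(0, Φ(x,w))`
for all `(x,w) ∈ U × V` with `Φ(x,w) ≠ ∅` and `d(0, Φ(x,w)) < γ`. -/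
def RobinsonStable {n d : ℕ} (f₀ F : En n × En d → ℝ) (w0 : En d) (x0 : En n) : Prop :=
  ∃ r : ℝ, 0 < r ∧ ∃ γ : ℝ, 0 < γ ∧ ∃ U ∈ nhds x0, ∃ V ∈ nhds w0,
    ∀ x ∈ U, ∀ w ∈ V, (PhiGen f₀ F x w).Nonempty →
      Metric.infDist 0 (PhiGen f₀ F x w) < γ →
      Metric.infDist x (Sgen f₀ F w) ≤ r * Metric.infDist 0 (PhiGen f₀ F x w)

/-! Near `(x0, w0)` the constraint is inactive, so `Φ(x, w) = {∇ₓf₀(x, w)}` and every zero of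
`∇ₓf₀(·, w)` lies in `S(w)`. Because the Hessian is invertible, so is the derivative of
`G(x, w) = (∇ₓf₀(x, w), w)` at `(x0, w0)`, and the inverse function theorem gives a local inverse
that is Lipschitz with some constant `K`. With `z(w)` defined by `G(z(w), w) = (0, w)`,
`‖x - z(w)‖ ≤ K ‖G(x, w) - G(z(w), w)‖ = K ‖∇ₓf₀(x, w)‖`, which is the Robinson estimate. -/

open Filter Topology ContinuousLinearMap

section ProdDomain

variable {𝕜 : Type*} [NontriviallyNormedField 𝕜]
  {E P F : Type*} [NormedAddCommGroup E] [NormedSpace 𝕜 E] [NormedAddCommGroup P]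
  [NormedSpace 𝕜 P] [NormedAddCommGroup F] [NormedSpace 𝕜 F]

theorem fderiv_comp_prodMk_left {g : E × P → F} {x : E} {w : P}
    (hg : DifferentiableAt 𝕜 g (x, w)) :
    fderiv 𝕜 (fun y => g (y, w)) x = fderiv 𝕜 g (x, w) ∘L inl 𝕜 E P :=
  (hg.hasFDerivAt.comp x (hasFDerivAt_prodMk_left x w)).fderiv

theorem ContinuousLinearMap.IsInvertible.prod_snd {A : E × P →L[𝕜] E}
    (hA : (A ∘L inl 𝕜 E P).IsInvertible) : (A.prod (snd 𝕜 E P)).IsInvertible := by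
  set B := (A ∘L inl 𝕜 E P).inverse
  have hsplit (x : E) (w : P) : A (x, w) = (A ∘L inl 𝕜 E P) x + A (0, w) := by
    rw [comp_apply, inl_apply, ← map_add, Prod.mk_add_mk, add_zero, zero_add]
  -- the inverse is `(y, w) ↦ (B (y - A (0, w)), w)`
  refine IsInvertible.of_inverse (g := (B ∘L (fst 𝕜 E P - A ∘L inr 𝕜 E P ∘L snd 𝕜 E P)).prod
    (snd 𝕜 E P)) ?_ ?_ <;> refine ContinuousLinearMap.ext fun ⟨x, w⟩ => ?_
  · simp only [comp_apply, prod_apply, sub_apply, coe_fst', inr_apply,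
      coe_snd', coe_id', id_eq]
    rw [hsplit (B (x - A (0, w))) w, hA.self_apply_inverse, sub_add_cancel]
  · simp only [comp_apply, prod_apply, sub_apply, coe_fst', inr_apply,
      coe_snd', coe_id', id_eq]
    rw [hsplit x w, add_sub_cancel_right, hA.inverse_apply_self]

variable [CompleteSpace E] [CompleteSpace P]

theorem HasStrictFDerivAt.exists_implicit_zero_errorBound {g : E × P → E} {A : E × P →L[𝕜] E}
    {x₀ : E} {w₀ : P} (hg : HasStrictFDerivAt g A (x₀, w₀)) (hg₀ : g (x₀, w₀) = 0)
    (hA : (A ∘L inl 𝕜 E P).IsInvertible) :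
    ∃ K > (0 : ℝ), ∃ z : P → E, Tendsto z (𝓝 w₀) (𝓝 x₀) ∧ (∀ᶠ w in 𝓝 w₀, g (z w, w) = 0) ∧
      ∀ᶠ p in 𝓝 (x₀, w₀), ‖p.1 - z p.2‖ ≤ K * ‖g p‖ := by
  obtain ⟨e, he⟩ := hA.prod_snd
  set G : E × P → E × P := fun p => (g p, p.2)
  have hG : HasStrictFDerivAt G (e : E × P →L[𝕜] E × P) (x₀, w₀) :=
    he ▸ hg.prodMk hasStrictFDerivAt_snd
  have hG₀ : G (x₀, w₀) = (0, w₀) := by simp only [G, hg₀]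
  set H := hG.localInverse G e (x₀, w₀)
  obtain ⟨K, T, hT, hH⟩ := hG.to_localInverse.exists_lipschitzOnWith
  have hι : Tendsto (fun w : P => ((0 : E), w)) (𝓝 w₀) (𝓝 (G (x₀, w₀))) :=
    hG₀ ▸ (continuous_const.prodMk continuous_id).tendsto w₀
  set z : P → E := fun w => (H (0, w)).1
  have hgraph : ∀ᶠ w in 𝓝 w₀, H (0, w) = (z w, w) ∧ g (z w, w) = 0 ∧ (0, w) ∈ T := by
    filter_upwards [hι.eventually hG.eventually_right_inverse, hι.eventually_mem hT]
      with w hGH hwT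
    have hHw₂ : (H (0, w)).2 = w := congrArg Prod.snd hGH
    have hHw : H (0, w) = (z w, w) := Prod.ext rfl hHw₂
    exact ⟨hHw, hHw ▸ congrArg Prod.fst hGH, hwT⟩
  refine ⟨K + 1, by positivity, z, ?_, hgraph.mono fun w hw => hw.2.1, ?_⟩
  · have hH₀ : Tendsto H (𝓝 (G (x₀, w₀))) (𝓝 (x₀, w₀)) := by
      simpa only [hG.localInverse_apply_image] using hG.localInverse_continuousAt.tendsto
    exact (continuous_fst.tendsto _).comp (hH₀.comp hι)
  · filter_upwards [hG.eventually_left_inverse, hG.continuousAt.eventually_mem hT,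
      (continuous_snd.tendsto (x₀, w₀)).eventually hgraph] with p hHG hGT hp
    obtain ⟨hHz, -, hzT⟩ := hp
    calc ‖p.1 - z p.2‖ ≤ dist p (z p.2, p.2) := by
          rw [Prod.dist_eq, dist_eq_norm]; exact le_max_left _ _
    _ = dist (H (G p)) (H (0, p.2)) := by rw [hHz]; exact congrArg (dist · _) hHG.symm
    _ ≤ K * dist (G p) (0, p.2) := hH.dist_le_mul _ hGT _ hzT
    _ = K * ‖g p‖ := by simp [G, Prod.dist_eq, dist_zero_right]
    _ ≤ (K + 1) * ‖g p‖ := by gcongr; linarith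

end ProdDomain

theorem ContinuousLinearMap.isInvertible_of_injective {𝕜 E : Type*} [NontriviallyNormedField 𝕜]
    [CompleteSpace 𝕜] [NormedAddCommGroup E] [NormedSpace 𝕜 E] [FiniteDimensional 𝕜 E]
    {f : E →L[𝕜] E} (hf : Function.Injective f) : f.IsInvertible :=
  ⟨(LinearEquiv.ofInjectiveEndo f.toLinearMap hf).toContinuousLinearEquiv, rfl⟩

section PartialGradient

variable {E P : Type*} [NormedAddCommGroup E] [InnerProductSpace ℝ E] [CompleteSpace E]
  [NormedAddCommGroup P] [NormedSpace ℝ P]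

def partialGrad (f : E × P → ℝ) (p : E × P) : E :=
  (InnerProductSpace.toDual ℝ E).symm (fderiv ℝ f p ∘L inl ℝ E P)

theorem ContDiff.partialGrad {f : E × P → ℝ} {k m : WithTop ℕ∞} (hf : ContDiff ℝ m f)
    (hkm : k + 1 ≤ m) : ContDiff ℝ k (partialGrad f) :=
  (InnerProductSpace.toDual ℝ E).symm.toContinuousLinearEquiv.contDiff.comp <|
    ((compL ℝ E (E × P) ℝ).flip (inl ℝ E P)).contDiff.comp (hf.fderiv_right hkm)

end PartialGradient

theorem gradx_eq_partialGrad {n d : ℕ} {f : En n × En d → ℝ} {x : En n} {w : En d}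
    (hf : DifferentiableAt ℝ f (x, w)) : gradx f x w = partialGrad f (x, w) := by
  rw [gradx, gradient, fderiv_comp_prodMk_left hf, partialGrad]

section Inactive

variable {n d : ℕ} {f₀ F : En n × En d → ℝ} {x : En n} {w : En d}

theorem mem_sgen_of_gradx_eq_zero (hF : F (x, w) ≤ 0) (h : gradx f₀ x w = 0) :
    x ∈ Sgen f₀ F w :=
  ⟨hF, 0, le_rfl, by rw [zero_smul, add_zero, h], zero_mul _⟩

theorem phiGen_eq_singleton (hF : F (x, w) < 0) : PhiGen f₀ F x w = {gradx f₀ x w} := by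
  ext v
  constructor
  · rintro ⟨-, μ, -, hμF, rfl⟩
    rw [(mul_eq_zero.1 hμF).resolve_right hF.ne, zero_smul, add_zero]
    rfl
  · rintro rfl
    exact ⟨hF.le, 0, le_rfl, zero_mul _, by rw [zero_smul, add_zero]⟩

theorem infDist_zero_phiGen (hF : F (x, w) < 0) :
    Metric.infDist 0 (PhiGen f₀ F x w) = ‖gradx f₀ x w‖ := by
  rw [phiGen_eq_singleton hF, Metric.infDist_singleton, dist_zero_left]

end Inactive

/-- If `F(x0,w0) < 0`, `∇ₓf₀(x0,w0) = 0` and the Hessian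
`∇²ₓₓf₀(x0,w0)` has trivial kernel, then `S` has the Robinson stability at
`ω₀ = (x0, w0, 0)`. -/
theorem stmt7 {n d : ℕ} (f₀ F : En n × En d → ℝ)
    (hf₀ : ContDiff ℝ 2 f₀) (hF : ContDiff ℝ 2 F)
    (x0 : En n) (w0 : En d)
    (hFlt : F (x0, w0) < 0)
    (hstat : gradx f₀ x0 w0 = 0)
    (hker : ∀ v : En n,
      (fderiv ℝ (fun y => gradx f₀ y w0) x0) v = 0 → v = 0) :
    RobinsonStable f₀ F w0 x0 := by
  set g := partialGrad f₀
  have hgx (x : En n) (w : En d) : gradx f₀ x w = g (x, w) :=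
    gradx_eq_partialGrad (hf₀.differentiable two_ne_zero _)
  have hg : HasStrictFDerivAt g (fderiv ℝ g (x0, w0)) (x0, w0) :=
    (hf₀.partialGrad (k := 1) one_add_one_eq_two.le).contDiffAt.hasStrictFDerivAt one_ne_zero
  have hinv : (fderiv ℝ g (x0, w0) ∘L inl ℝ (En n) (En d)).IsInvertible := by
    rw [← fderiv_comp_prodMk_left hg.differentiableAt]
    simp only [← hgx]
    exact isInvertible_of_injective ((injective_iff_map_eq_zero _).2 hker)
  obtain ⟨K, hK, z, hz, hgz, hbound⟩ := hg.exists_implicit_zero_errorBound (hgx x0 w0 ▸ hstat) hinv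
  have hFz : ∀ᶠ w in 𝓝 w0, F (z w, w) < 0 :=
    (hF.continuous.tendsto _).comp (hz.prodMk_nhds tendsto_id) |>.eventually_lt_const hFlt
  obtain ⟨U, hU, V, hV, hUV⟩ :=
    mem_nhds_prod_iff.1 (hbound.and (hF.continuous.continuousAt.eventually_lt_const hFlt))
  refine ⟨K, hK, 1, one_pos, U, hU, V ∩ {w | F (z w, w) < 0 ∧ g (z w, w) = 0},
    inter_mem hV (hFz.and hgz), ?_⟩
  rintro x hx w ⟨hwV, hFzw, hgzw⟩ - -
  obtain ⟨hxw, hFxw⟩ := hUV (Set.mk_mem_prod hx hwV)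
  rw [infDist_zero_phiGen hFxw, hgx]
  calc Metric.infDist x (Sgen f₀ F w) ≤ dist x (z w) :=
        Metric.infDist_le_dist_of_mem (mem_sgen_of_gradx_eq_zero hFzw.le (hgx _ _ ▸ hgzw))
  _ ≤ K * ‖g (x, w)‖ := by rwa [dist_eq_norm]
end
end

section
/- Let f₀,F : ℝⁿ×ℝ^d → ℝ be C² functions and let (x̄,w̄) satisfy F(x̄,w̄) = 0, ∇ₓF(x̄,w̄) ≠ 0, and suppose there is λ > 0 with ∇ₓf₀(x̄,w̄)+λ∇ₓF(x̄,w̄) = 0 (positive Lagrange multiplier). If the only pair (v,γ) ∈ ℝⁿ×ℝ satisfying (∇²ₓₓf₀(x̄,w̄)+λ∇²ₓₓF(x̄,w̄))v + γ∇ₓF(x̄,w̄) = 0 and ⟨∇ₓF(x̄,w̄), v⟩ = 0 is (0,0), then the stationary point set map S has the Robinson stability at ω₀=(x̄,w̄,0). -/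
noncomputable section

/-!
Write the KKT system as `G(x, μ, w) = (0, 0, w)` with `G(x, μ, w) = (∇ₓf₀ + μ∇ₓF, F, w)`.
The second-order condition says exactly that `DG(x̄, λ, w̄)` is injective, hence invertible, so
by the inverse function theorem `G` is metrically regular around `(x̄, λ, w̄)`.
If `z = ∇ₓf₀(x,w) + μ∇ₓF(x,w) ∈ Φ(x,w)` is small, then, `∇ₓF` being bounded away from `0`, the
multiplier `μ` is close to `λ > 0`; so the constraint is active and `G(x, μ, w) = (z, 0, w)`.
Metric regularity then gives a solution `(x', μ', w)` of `G = (0, 0, w)` with `μ' > 0` and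
`‖x - x'‖ ≤ K‖z‖`, and `x' ∈ S(w)`.
-/

open Filter Topology Metric InnerProductSpace ContinuousLinearMap

theorem HasStrictFDerivAt.exists_local_metric_regularity
    {𝕜 E F : Type*} [NontriviallyNormedField 𝕜] [NormedAddCommGroup E] [NormedSpace 𝕜 E]
    [CompleteSpace E] [NormedAddCommGroup F] [NormedSpace 𝕜 F]
    {f : E → F} {f' : E ≃L[𝕜] F} {a : E} (hf : HasStrictFDerivAt f (f' : E →L[𝕜] F) a)
    {W : Set E} (hW : W ∈ 𝓝 a) :
    ∃ K > 0, ∃ U ∈ 𝓝 a, ∃ V ∈ 𝓝 (f a), ∀ p ∈ U, ∀ q ∈ V,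
      ∃ p' ∈ W, f p' = q ∧ dist p p' ≤ K * dist (f p) q := by
  set g := hf.localInverse f f' a
  obtain ⟨K, s, hs, hK⟩ := hf.to_localInverse.exists_lipschitzOnWith
  have hgW : ∀ᶠ q in 𝓝 (f a), g q ∈ W :=
    hf.localInverse_continuousAt.preimage_mem_nhds (by rwa [hf.localInverse_apply_image])
  have hfs : ∀ᶠ p in 𝓝 a, f p ∈ s := hf.continuousAt.preimage_mem_nhds hs
  refine ⟨K + 1, by positivity, _, hf.eventually_left_inverse.and hfs, _,
    hgW.and (hf.eventually_right_inverse.and hs), ?_⟩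
  rintro p ⟨hgp, hps⟩ q ⟨hqW, hfq, hqs⟩
  refine ⟨g q, hqW, hfq, ?_⟩
  calc dist p (g q) = dist (g (f p)) (g q) := congrArg (dist · (g q)) hgp.symm
    _ ≤ K * dist (f p) q := hK.dist_le_mul _ hps _ hqs
    _ ≤ (K + 1) * dist (f p) q := by gcongr; linarith

theorem ContinuousLinearMap.exists_equiv_of_injective {𝕜 E : Type*} [NontriviallyNormedField 𝕜]
    [CompleteSpace 𝕜] [NormedAddCommGroup E] [NormedSpace 𝕜 E] [FiniteDimensional 𝕜 E]
    (f : E →L[𝕜] E) (hf : Function.Injective f) :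
    ∃ e : E ≃L[𝕜] E, (e : E →L[𝕜] E) = f :=
  ⟨(LinearEquiv.ofInjectiveEndo f.toLinearMap hf).toContinuousLinearEquiv, by ext; rfl⟩

theorem exists_pos_eventually_abs_sub_lt_of_norm_add_smul_lt {X E : Type*} [TopologicalSpace X]
    [NormedAddCommGroup E] [NormedSpace ℝ E] {a b : X → E} {x₀ : X} {lam ε : ℝ}
    (ha : ContinuousAt a x₀) (hb : ContinuousAt b x₀) (hb₀ : b x₀ ≠ 0)
    (hab : a x₀ + lam • b x₀ = 0) (hε : 0 < ε) :
    ∃ γ > 0, ∀ᶠ x in 𝓝 x₀, ∀ μ : ℝ, ‖a x + μ • b x‖ < γ → |μ - lam| < ε := by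
  set c := ‖b x₀‖
  have hc : 0 < c := norm_pos_iff.2 hb₀
  have hsmall : ∀ᶠ x in 𝓝 x₀, ‖a x + lam • b x‖ < ε * c / 4 := by
    have : Tendsto (fun x => a x + lam • b x) (𝓝 x₀) (𝓝 0) := hab ▸ ha.add (hb.const_smul lam)
    exact this.norm.eventually (gt_mem_nhds (by rw [norm_zero]; positivity))
  have hlarge : ∀ᶠ x in 𝓝 x₀, c / 2 < ‖b x‖ :=
    hb.norm.eventually (lt_mem_nhds (by linarith))
  refine ⟨ε * c / 4, by positivity, ?_⟩
  filter_upwards [hsmall, hlarge] with x hax hbx μ hμ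
  have hdiff : |μ - lam| * ‖b x‖ < ε * c / 2 := by
    calc |μ - lam| * ‖b x‖ = ‖(a x + μ • b x) - (a x + lam • b x)‖ := by
          rw [← Real.norm_eq_abs, ← norm_smul, sub_smul]; congr 1; abel
      _ ≤ ‖a x + μ • b x‖ + ‖a x + lam • b x‖ := norm_sub_le _ _
      _ < ε * c / 2 := by linarith
  by_contra! h
  nlinarith [mul_le_mul h hbx.le (by positivity) (abs_nonneg _)]

theorem le_mul_infDist_zero_of_forall {E : Type*} [SeminormedAddCommGroup E] {A : Set E}
    (hA : A.Nonempty) {D r γ : ℝ} (hr : 0 < r) (h : ∀ z ∈ A, ‖z‖ < γ → D ≤ r * ‖z‖)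
    (hγ : infDist 0 A < γ) : D ≤ r * infDist 0 A := by
  rw [← div_le_iff₀' hr]
  refine le_of_forall_gt_imp_ge_of_dense fun b hb => ?_
  obtain ⟨z, hzA, hz⟩ := (infDist_lt_iff hA).1 (lt_min hb hγ)
  rw [dist_zero_left, lt_min_iff] at hz
  rw [div_le_iff₀' hr]
  exact (h z hzA hz.2).trans (by gcongr; exact hz.1.le)

theorem exists_pos_eventually_forall_abs_sub_lt_mem {X Y : Type*} [PseudoMetricSpace X]
    [PseudoMetricSpace Y] {x₀ : X} {y₀ : Y} {lam : ℝ} {U : Set (X × ℝ × Y)}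
    (hU : U ∈ 𝓝 (x₀, lam, y₀)) :
    ∃ ε > 0, ∀ᶠ q in 𝓝 (x₀, y₀), ∀ μ : ℝ, |μ - lam| < ε → (q.1, μ, q.2) ∈ U := by
  obtain ⟨ε, hε, hball⟩ := Metric.mem_nhds_iff.1 hU
  refine ⟨ε, hε, ?_⟩
  filter_upwards [ball_mem_nhds _ hε] with q hq μ hμ
  rw [mem_ball, Prod.dist_eq, max_lt_iff] at hq
  apply hball
  rw [mem_ball, Prod.dist_eq, Prod.dist_eq, Real.dist_eq]
  exact max_lt hq.1 (max_lt hμ hq.2)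

section KKTMap

variable {E W : Type*} [NormedAddCommGroup E] [InnerProductSpace ℝ E] [CompleteSpace E]
  [NormedAddCommGroup W] [NormedSpace ℝ W]

def gradFst (f : E × W → ℝ) (p : E × W) : E :=
  gradient (fun y => f (y, p.2)) p.1

theorem gradFst_eq_toDual_symm {f : E × W → ℝ} {p : E × W} (hf : DifferentiableAt ℝ f p) :
    gradFst f p = (toDual ℝ E).symm ((fderiv ℝ f p).comp (inl ℝ E W)) := by
  rw [gradFst, gradient, ← (hf.hasFDerivAt.comp p.1 (hasFDerivAt_prodMk_left p.1 p.2)).fderiv]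
  rfl

theorem inner_gradFst {f : E × W → ℝ} {p : E × W} (hf : DifferentiableAt ℝ f p) (v : E) :
    inner ℝ (gradFst f p) v = fderiv ℝ f p (v, 0) := by
  rw [gradFst_eq_toDual_symm hf, toDual_symm_apply]
  rfl

theorem contDiff_gradFst {f : E × W → ℝ} {k : WithTop ℕ∞} (hf : ContDiff ℝ (k + 1) f) :
    ContDiff ℝ k (gradFst f) := by
  have hdf : Differentiable ℝ f := hf.differentiable (by simp)
  rw [show gradFst f = _ from funext fun p => gradFst_eq_toDual_symm (hdf p)]
  exact (toDual ℝ E).symm.contDiff.comp ((hf.fderiv_right le_rfl).clm_comp contDiff_const)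

theorem fderiv_gradFst_prodMk_left {f : E × W → ℝ} {x : E} {w : W}
    (hf : DifferentiableAt ℝ (gradFst f) (x, w)) (v : E) :
    fderiv ℝ (fun y => gradFst f (y, w)) x v = fderiv ℝ (gradFst f) (x, w) (v, 0) := by
  rw [show (fun y => gradFst f (y, w)) = gradFst f ∘ (·, w) from rfl,
    (hf.hasFDerivAt.comp x (hasFDerivAt_prodMk_left x w)).fderiv]
  rfl

def kktMap (f₀ F : E × W → ℝ) (p : E × ℝ × W) : E × ℝ × W :=
  (gradFst f₀ (p.1, p.2.2) + p.2.1 • gradFst F (p.1, p.2.2), F (p.1, p.2.2), p.2.2)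

variable {f₀ F : E × W → ℝ}

theorem contDiff_kktMap (hf₀ : ContDiff ℝ 2 f₀) (hF : ContDiff ℝ 2 F) :
    ContDiff ℝ 1 (kktMap f₀ F) := by
  have hπ : ContDiff ℝ 1 (fun p : E × ℝ × W => (p.1, p.2.2)) := by fun_prop
  exact (((contDiff_gradFst hf₀).comp hπ).add ((contDiff_fst.comp contDiff_snd).smul
    ((contDiff_gradFst hF).comp hπ))).prodMk (((hF.of_le (by norm_num)).comp hπ).prodMk
    (contDiff_snd.comp contDiff_snd))

theorem fderiv_kktMap_apply (hf₀ : ContDiff ℝ 2 f₀) (hF : ContDiff ℝ 2 F) (p e : E × ℝ × W) :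
    fderiv ℝ (kktMap f₀ F) p e =
      (fderiv ℝ (gradFst f₀) (p.1, p.2.2) (e.1, e.2.2)
        + p.2.1 • fderiv ℝ (gradFst F) (p.1, p.2.2) (e.1, e.2.2)
        + e.2.1 • gradFst F (p.1, p.2.2),
      fderiv ℝ F (p.1, p.2.2) (e.1, e.2.2), e.2.2) := by
  have hπ : HasFDerivAt (fun p : E × ℝ × W => (p.1, p.2.2))
      ((fst ℝ E (ℝ × W)).prod ((snd ℝ ℝ W).comp (snd ℝ E (ℝ × W)))) p :=
    hasFDerivAt_fst.prodMk hasFDerivAt_snd.snd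
  have hd := fun (f : E × W → ℝ) (hf : ContDiff ℝ 2 f) =>
    ((contDiff_gradFst (k := 1) hf).differentiable one_ne_zero _).hasFDerivAt.comp p hπ
  have hFd := ((hF.differentiable two_ne_zero) _).hasFDerivAt.comp p hπ
  have hG : HasFDerivAt (kktMap f₀ F) _ p :=
    ((hd f₀ hf₀).add (hasFDerivAt_snd.fst.smul (hd F hF))).prodMk (hFd.prodMk hasFDerivAt_snd.snd)
  rw [hG.fderiv]
  simp [add_assoc]

end KKTMap

section StationaryPoints

variable {n d : ℕ} {f₀ F : En n × En d → ℝ}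

theorem gradx_eq_gradFst (f : En n × En d → ℝ) (x : En n) (w : En d) :
    gradx f x w = gradFst f (x, w) :=
  rfl

open RealInnerProductSpace in
theorem injective_fderiv_kktMap (hf₀ : ContDiff ℝ 2 f₀) (hF : ContDiff ℝ 2 F)
    {x0 : En n} {w0 : En d} {lam : ℝ}
    (hreg : ∀ (v : En n) (γ : ℝ),
      (fderiv ℝ (fun y => gradx f₀ y w0) x0) v
        + lam • (fderiv ℝ (fun y => gradx F y w0) x0) v
        + γ • gradx F x0 w0 = 0 →
      ⟪gradx F x0 w0, v⟫ = 0 → v = 0 ∧ γ = 0) :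
    Function.Injective (fderiv ℝ (kktMap f₀ F) (x0, lam, w0)) := by
  have hdiff {f : En n × En d → ℝ} (hf : ContDiff ℝ 2 f) :=
    (contDiff_gradFst (k := 1) hf).differentiable one_ne_zero (x0, w0)
  simp only [gradx_eq_gradFst, fderiv_gradFst_prodMk_left (hdiff hf₀),
    fderiv_gradFst_prodMk_left (hdiff hF), inner_gradFst ((hF.differentiable two_ne_zero) _)]
    at hreg
  rw [injective_iff_map_eq_zero]
  rintro ⟨v, δ, u⟩ he
  simp only [fderiv_kktMap_apply hf₀ hF, Prod.mk_eq_zero] at he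
  obtain ⟨hgrad, hF', rfl⟩ := he
  obtain ⟨rfl, rfl⟩ := hreg v δ hgrad hF'
  rfl

theorem mem_Sgen_of_kktMap_eq {p : En n × ℝ × En d} {w : En d}
    (hp : kktMap f₀ F p = (0, 0, w)) (hμ : 0 ≤ p.2.1) : p.1 ∈ Sgen f₀ F w := by
  simp only [kktMap, Prod.mk.injEq] at hp
  obtain ⟨hgrad, hF, rfl⟩ := hp
  exact ⟨hF.le, p.2.1, hμ, hgrad, by rw [hF, mul_zero]⟩

theorem infDist_Sgen_le_of_kktMap_eq {x : En n} {w : En d} {μ K : ℝ} {p : En n × ℝ × En d}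
    (hF₀ : F (x, w) = 0) (hp : kktMap f₀ F p = (0, 0, w)) (hμ : 0 ≤ p.2.1)
    (hdist : dist (x, μ, w) p ≤ K * dist (kktMap f₀ F (x, μ, w)) (0, 0, w)) :
    infDist x (Sgen f₀ F w) ≤ K * ‖gradx f₀ x w + μ • gradx F x w‖ :=
  calc infDist x (Sgen f₀ F w) ≤ dist x p.1 :=
        infDist_le_dist_of_mem (mem_Sgen_of_kktMap_eq hp hμ)
    _ ≤ dist (x, μ, w) p := by rw [Prod.dist_eq]; exact le_max_left _ _
    _ ≤ K * dist (kktMap f₀ F (x, μ, w)) (0, 0, w) := hdist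
    _ = K * ‖gradx f₀ x w + μ • gradx F x w‖ := by
        simp [kktMap, hF₀, Prod.dist_eq, gradx_eq_gradFst]

theorem robinsonStable_of_eventually {x0 : En n} {w0 : En d} {r γ : ℝ} (hr : 0 < r)
    (hγ : 0 < γ)
    (h : ∀ᶠ q in 𝓝 (x0, w0), (PhiGen f₀ F q.1 q.2).Nonempty →
      infDist 0 (PhiGen f₀ F q.1 q.2) < γ →
      infDist q.1 (Sgen f₀ F q.2) ≤ r * infDist 0 (PhiGen f₀ F q.1 q.2)) :
    RobinsonStable f₀ F w0 x0 := by
  obtain ⟨U, hU, V, hV, hUV⟩ := mem_nhds_prod_iff.1 h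
  exact ⟨r, hr, γ, hγ, U, hU, V, hV, fun x hx w hw => hUV (a := (x, w)) ⟨hx, hw⟩⟩

end StationaryPoints

open RealInnerProductSpace in
/-- If `F(x0,w0) = 0`, `∇ₓF(x0,w0) ≠ 0`, the Lagrange multiplier
`λ > 0`, and the only `(v,γ)` with `(∇²ₓₓf₀ + λ∇²ₓₓF)v + γ∇ₓF = 0` and
`⟨∇ₓF, v⟩ = 0` is `(0,0)`, then `S` has the Robinson stability at `ω₀ = (x0, w0, 0)`. -/
theorem stmt8 {n d : ℕ} (f₀ F : En n × En d → ℝ)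
    (hf₀ : ContDiff ℝ 2 f₀) (hF : ContDiff ℝ 2 F)
    (x0 : En n) (w0 : En d) (lam : ℝ)
    (hFeq : F (x0, w0) = 0)
    (hgF : gradx F x0 w0 ≠ 0)
    (hlam : 0 < lam)
    (hKKT : gradx f₀ x0 w0 + lam • gradx F x0 w0 = 0)
    (hreg : ∀ (v : En n) (γ : ℝ),
      (fderiv ℝ (fun y => gradx f₀ y w0) x0) v
        + lam • (fderiv ℝ (fun y => gradx F y w0) x0) v
        + γ • gradx F x0 w0 = 0 →
      ⟪gradx F x0 w0, v⟫ = 0 → v = 0 ∧ γ = 0) :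
    RobinsonStable f₀ F w0 x0 := by
  obtain ⟨D, hD⟩ := (fderiv ℝ (kktMap f₀ F) (x0, lam, w0)).exists_equiv_of_injective
    (injective_fderiv_kktMap hf₀ hF hreg)
  have hG : HasStrictFDerivAt (kktMap f₀ F) (D : _ →L[ℝ] _) (x0, lam, w0) :=
    hD ▸ (contDiff_kktMap hf₀ hF).contDiffAt.hasStrictFDerivAt one_ne_zero
  have hG₀ : kktMap f₀ F (x0, lam, w0) = (0, 0, w0) := by
    simp only [kktMap, ← gradx_eq_gradFst, hKKT, hFeq]
  obtain ⟨K, hK, U, hU, V, hV, hmetric⟩ := hG.exists_local_metric_regularity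
    ((isOpen_lt continuous_const (continuous_fst.comp continuous_snd)).mem_nhds hlam)
  rw [hG₀] at hV
  obtain ⟨ε, hε, hUε⟩ := exists_pos_eventually_forall_abs_sub_lt_mem hU
  obtain ⟨γ, hγ, hmult⟩ := exists_pos_eventually_abs_sub_lt_of_norm_add_smul_lt
    ((contDiff_gradFst (k := 1) hf₀).continuous.continuousAt (x := (x0, w0)))
    (contDiff_gradFst (k := 1) hF).continuous.continuousAt hgF hKKT (lt_min hε hlam)
  have hVq : ∀ᶠ q : En n × En d in 𝓝 (x0, w0), ((0 : En n), (0 : ℝ), q.2) ∈ V :=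
    (continuous_const.prodMk (continuous_const.prodMk continuous_snd)).continuousAt
      |>.preimage_mem_nhds hV
  refine robinsonStable_of_eventually hK hγ ?_
  filter_upwards [hUε, hmult, hVq] with ⟨x, w⟩ hUq hmq hVq hΦ hΦγ
  refine le_mul_infDist_zero_of_forall hΦ hK (fun z hz hzγ => ?_) hΦγ
  obtain ⟨-, μ, -, hμF, rfl⟩ := hz
  have hμ := hmq μ hzγ
  have hμpos : 0 < μ := by linarith [(abs_lt.1 hμ).1, min_le_right ε lam]
  have hF₀ : F (x, w) = 0 := (mul_eq_zero.1 hμF).resolve_left hμpos.ne'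
  obtain ⟨p', hp'pos, hp', hdist⟩ := hmetric _ (hUq μ (hμ.trans_le (min_le_left _ _))) _ hVq
  exact infDist_Sgen_le_of_kktMap_eq hF₀ hp' hp'pos.le hdist
end
end
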